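/- arXiv:1912.00734 — 7 statements merged into one kernel-verified Lean document; each statement's English description precedes it below -/
import Mathlib

section
/- Let T_t be a semigroup on L^2(ν) with nonnegative kernel satisfying two-sided Gaussian bounds, and let ω be the bounded harmonic function (C^{-1} ≤ ω ≤ C, T_t ω = ω). If ω̃ is any bounded measurable function with T_t ω̃ = ω̃ for all t > 0, then ω̃ is a constant multiple of ω. -/
open MeasureTheory Metric Filter
open scoped ENNReal Topology

/-- Uniqueness of the bounded harmonic function for a semigroup with two-sided Gaussian
bounds: any bounded measurable `ω̃` with `T_t ω̃ = ω̃` for all `t > 0` is a constant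
multiple of the harmonic function `ω`. -/
theorem stmt3 {X : Type*} [MetricSpace X] [MeasurableSpace X] [BorelSpace X]
    (ν : Measure X) (hν : ν Set.univ = ∞)
    (Cd : ℝ) (hCd : 0 < Cd)
    (hdouble : ∀ (x : X) (r : ℝ), 0 < r →
      ν (ball x (2 * r)) ≤ ENNReal.ofReal Cd * ν (ball x r))
    (hball : ∀ (x : X) (r : ℝ), 0 < r → 0 < (ν (ball x r)).toReal)
    (T : ℝ → X → X → ℝ) (hTmeas : ∀ t x, Measurable (T t x))
    (hTsym : ∀ t x y, T t x y = T t y x)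
    (C c₁ c₂ c₃ δ : ℝ) (hC : 0 < C) (hc₁ : 0 < c₁) (hc₂ : 0 < c₂) (hc₃ : 0 < c₃)
    (hδ : 0 < δ)
    (hlower : ∀ t x y, 0 < t →
      C⁻¹ * ((ν (ball x (Real.sqrt t))).toReal)⁻¹ *
        Real.exp (-(dist x y) ^ 2 / (c₁ * t)) ≤ T t x y)
    (hupper : ∀ t x y, 0 < t →
      T t x y ≤ C * ((ν (ball x (Real.sqrt t))).toReal)⁻¹ *
        Real.exp (-(dist x y) ^ 2 / (c₂ * t)))
    (ω : X → ℝ) (hωmeas : Measurable ω)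
    (hω : ∀ x, C⁻¹ ≤ ω x ∧ ω x ≤ C)
    (hharm : ∀ t x, 0 < t → ∫ y, T t x y * ω y ∂ν = ω x)
    (hHolder : ∀ t x y y₀, 0 < t → dist y y₀ < Real.sqrt t →
      |T t x y / (ω x * ω y) - T t x y₀ / (ω x * ω y₀)| ≤
        C * (dist y y₀ / Real.sqrt t) ^ δ * ((ν (ball x (Real.sqrt t))).toReal)⁻¹ *
          Real.exp (-(dist x y) ^ 2 / (c₃ * t)))
    (ωt : X → ℝ) (hωtmeas : Measurable ωt) (M : ℝ) (hωtb : ∀ x, |ωt x| ≤ M)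
    (hωtharm : ∀ t x, 0 < t → ∫ y, T t x y * ωt y ∂ν = ωt x) :
    ∃ c : ℝ, ∀ x, ωt x = c * ω x := by
  -- X is nonempty
  have hXne : Nonempty X := by
    by_contra h
    rw [not_nonempty_iff] at h
    rw [Set.univ_eq_empty_iff.mpr h] at hν
    simp at hν
  obtain ⟨x₀⟩ := hXne
  have hCinv : (0:ℝ) < C⁻¹ := inv_pos.mpr hC
  have hωpos : ∀ x, 0 < ω x := fun x => lt_of_lt_of_le hCinv (hω x).1
  have hM : 0 ≤ M := (abs_nonneg _).trans (hωtb x₀)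
  -- volume facts
  have hVfin : ∀ (y : X) (r : ℝ), 0 < r → ν (ball y r) ≠ ∞ := by
    intro y r hr h
    have := hball y r hr
    rw [h] at this
    simp at this
  have hVmono : ∀ (y : X) (r r' : ℝ), 0 < r → r ≤ r' →
      (ν (ball y r)).toReal ≤ (ν (ball y r')).toReal := by
    intro y r r' hr hrr
    exact ENNReal.toReal_mono (hVfin y r' (lt_of_lt_of_le hr hrr))
      (measure_mono (ball_subset_ball hrr))
  have hVdouble : ∀ (y : X) (r : ℝ), 0 < r →
      (ν (ball y (2 * r))).toReal ≤ Cd * (ν (ball y r)).toReal := by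
    intro y r hr
    have h2 := hdouble y r hr
    have h3 := ENNReal.toReal_mono
      (ENNReal.mul_ne_top ENNReal.ofReal_ne_top (hVfin y r hr)) h2
    rwa [ENNReal.toReal_mul, ENNReal.toReal_ofReal hCd.le] at h3
  have hVpow : ∀ (y : X) (r : ℝ) (k : ℕ), 0 < r →
      (ν (ball y (2 ^ k * r))).toReal ≤ (max Cd 1) ^ k * (ν (ball y r)).toReal := by
    intro y r k hr
    induction k with
    | zero => simp
    | succ n ih =>
      have h1 : (2:ℝ) ^ (n+1) * r = 2 * (2 ^ n * r) := by ring
      rw [h1]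
      calc (ν (ball y (2 * (2 ^ n * r)))).toReal
          ≤ Cd * (ν (ball y (2 ^ n * r))).toReal := hVdouble y _ (by positivity)
        _ ≤ (max Cd 1) * ((max Cd 1) ^ n * (ν (ball y r)).toReal) := by
            apply mul_le_mul (le_max_left _ _) ih (by positivity) (by positivity)
        _ = (max Cd 1) ^ (n+1) * (ν (ball y r)).toReal := by ring
  -- positivity of the kernel
  have hTpos : ∀ t x y, 0 < t → 0 < T t x y := by
    intro t x y ht
    refine lt_of_lt_of_le ?_ (hlower t x y ht)
    have hv := hball x (Real.sqrt t) (Real.sqrt_pos.mpr ht)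
    positivity
  -- pointwise comparison T ≤ C * (T * ω)
  have hpt : ∀ t x y, 0 < t → T t x y ≤ C * (T t x y * ω y) := by
    intro t x y ht
    have hT := (hTpos t x y ht).le
    calc T t x y = T t x y * (C * C⁻¹) := by
          rw [mul_inv_cancel₀ (ne_of_gt hC)]; ring
      _ ≤ T t x y * (C * ω y) := by
          apply mul_le_mul_of_nonneg_left _ hT
          exact mul_le_mul_of_nonneg_left (hω y).1 hC.le
      _ = C * (T t x y * ω y) := by ring
  -- integrability of T·ω
  have hIntω : ∀ t x, 0 < t → Integrable (fun y => T t x y * ω y) ν := by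
    intro t x ht
    by_contra h
    have h0 : ω x = 0 := by rw [← hharm t x ht, MeasureTheory.integral_undef h]
    exact absurd h0 (ne_of_gt (hωpos x))
  -- integrability of T
  have hIntT : ∀ t x, 0 < t → Integrable (fun y => T t x y) ν := by
    intro t x ht
    refine Integrable.mono ((hIntω t x ht).const_mul C)
      (hTmeas t x).aestronglyMeasurable ?_
    filter_upwards with y
    have hT := (hTpos t x y ht).le
    have hωy := (hωpos y).le
    rw [Real.norm_eq_abs, Real.norm_eq_abs, abs_of_nonneg hT,
      abs_of_nonneg (by positivity : (0:ℝ) ≤ C * (T t x y * ω y))]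
    exact hpt t x y ht
  -- integrability of T·ωt
  have hIntTωt : ∀ t x, 0 < t → Integrable (fun y => T t x y * ωt y) ν := by
    intro t x ht
    refine Integrable.mono ((hIntT t x ht).const_mul M)
      ((hTmeas t x).mul hωtmeas).aestronglyMeasurable ?_
    filter_upwards with y
    have hT := (hTpos t x y ht).le
    rw [Real.norm_eq_abs, Real.norm_eq_abs, abs_mul, abs_of_nonneg hT,
      abs_of_nonneg (by positivity : (0:ℝ) ≤ M * T t x y)]
    calc T t x y * |ωt y| ≤ T t x y * M :=
          mul_le_mul_of_nonneg_left (hωtb y) hT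
      _ = M * T t x y := by ring
  -- uniform bound on ∫ T
  have hTbound : ∀ t x, 0 < t → ∫ y, T t x y ∂ν ≤ C ^ 2 := by
    intro t x ht
    calc ∫ y, T t x y ∂ν ≤ ∫ y, C * (T t x y * ω y) ∂ν := by
          exact integral_mono (hIntT t x ht) ((hIntω t x ht).const_mul C)
            (fun y => hpt t x y ht)
      _ = C * ω x := by rw [integral_const_mul _ _, hharm t x ht]
      _ ≤ C * C := mul_le_mul_of_nonneg_left (hω x).2 hC.le
      _ = C ^ 2 := (sq C).symm
  -- reduce to constancy of ωt/ω
  suffices hconst : ∀ x₁ x₂ : X, ωt x₁ / ω x₁ = ωt x₂ / ω x₂ by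
    refine ⟨ωt x₀ / ω x₀, fun x => ?_⟩
    rw [← hconst x x₀, div_mul_cancel₀ _ (ne_of_gt (hωpos x))]
  intro x₁ x₂
  rcases eq_or_ne x₁ x₂ with h | hne
  · rw [h]
  have hd : 0 < dist x₁ x₂ := dist_pos.mpr hne
  set d := dist x₁ x₂ with hd_def
  set a := max c₃ c₁ / c₁ with ha_def
  have ha1 : 1 ≤ a := (one_le_div hc₁).mpr (le_max_right _ _)
  have ha0 : 0 < a := lt_of_lt_of_le one_pos ha1
  set k := ⌈Real.sqrt a⌉₊ with hk_def
  have hk : Real.sqrt a ≤ (2:ℝ) ^ k := by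
    calc Real.sqrt a ≤ (k : ℝ) := Nat.le_ceil _
      _ ≤ (2:ℝ) ^ k := by exact_mod_cast (Nat.lt_two_pow_self (n := k)).le
  -- the key estimate
  have key : ∀ t : ℝ, d ^ 2 < t →
      |ωt x₁ / ω x₁ - ωt x₂ / ω x₂| ≤
        C ^ 5 * M * (max Cd 1) ^ k * ((d / Real.sqrt t) ^ δ) := by
    intro t ht2
    have ht : 0 < t := lt_of_le_of_lt (sq_nonneg d) ht2
    have hsq : 0 < Real.sqrt t := Real.sqrt_pos.mpr ht
    have hdt : d < Real.sqrt t := (Real.lt_sqrt hd.le).mpr ht2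
    have hE : (0:ℝ) ≤ (d / Real.sqrt t) ^ δ := Real.rpow_nonneg (by positivity) δ
    set s := a * t with hs_def
    have hs : 0 < s := mul_pos ha0 ht
    have hssq : 0 < Real.sqrt s := Real.sqrt_pos.mpr hs
    have hts : Real.sqrt s = Real.sqrt a * Real.sqrt t := Real.sqrt_mul ha0.le t
    -- the representation formula
    have h1 : ∀ y, (T t x₁ y / ω x₁ - T t x₂ y / ω x₂) * ωt y =
        (ω x₁)⁻¹ * (T t x₁ y * ωt y) - (ω x₂)⁻¹ * (T t x₂ y * ωt y) := by
      intro y; ring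
    have hint_eq : ∫ y, (T t x₁ y / ω x₁ - T t x₂ y / ω x₂) * ωt y ∂ν =
        ωt x₁ / ω x₁ - ωt x₂ / ω x₂ := by
      simp_rw [h1]
      rw [integral_sub ((hIntTωt t x₁ ht).const_mul _) ((hIntTωt t x₂ ht).const_mul _),
        integral_const_mul _ _, integral_const_mul _ _, hωtharm t x₁ ht, hωtharm t x₂ ht,
        inv_mul_eq_div, inv_mul_eq_div]
    have hFint : Integrable (fun y => (T t x₁ y / ω x₁ - T t x₂ y / ω x₂) * ωt y) ν := by
      refine Integrable.congr
        (((hIntTωt t x₁ ht).const_mul (ω x₁)⁻¹).sub ((hIntTωt t x₂ ht).const_mul (ω x₂)⁻¹))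
        (ae_of_all _ fun y => (h1 y).symm)
    -- pointwise bound
    have hptb : ∀ y, |(T t x₁ y / ω x₁ - T t x₂ y / ω x₂) * ωt y| ≤
        (C ^ 3 * M * (max Cd 1) ^ k * ((d / Real.sqrt t) ^ δ)) * T s x₁ y := by
      intro y
      have hωy := hωpos y
      have hω1 : ω x₁ ≠ 0 := (hωpos x₁).ne'
      have hω2 : ω x₂ ≠ 0 := (hωpos x₂).ne'
      have hω3 : ω y ≠ 0 := hωy.ne'
      have hre : T t x₁ y / ω x₁ - T t x₂ y / ω x₂ =
          ω y * (T t y x₁ / (ω y * ω x₁) - T t y x₂ / (ω y * ω x₂)) := by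
        rw [hTsym t y x₁, hTsym t y x₂]
        field_simp
      have hH := hHolder t y x₁ x₂ ht hdt
      -- volume comparison
      have hVs : ((ν (ball y (Real.sqrt t))).toReal)⁻¹ ≤
          (max Cd 1) ^ k * ((ν (ball y (Real.sqrt s))).toReal)⁻¹ := by
        have hVt := hball y (Real.sqrt t) hsq
        have hVsp := hball y (Real.sqrt s) hssq
        have h2 : (ν (ball y (Real.sqrt s))).toReal ≤
            (max Cd 1) ^ k * (ν (ball y (Real.sqrt t))).toReal := by
          calc (ν (ball y (Real.sqrt s))).toReal
              ≤ (ν (ball y (2 ^ k * Real.sqrt t))).toReal := by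
                apply hVmono y _ _ hssq
                rw [hts]
                exact mul_le_mul_of_nonneg_right hk hsq.le
            _ ≤ (max Cd 1) ^ k * (ν (ball y (Real.sqrt t))).toReal := hVpow y _ k hsq
        have h3 : (ν (ball y (Real.sqrt s))).toReal / (max Cd 1) ^ k ≤
            (ν (ball y (Real.sqrt t))).toReal := by
          rw [div_le_iff₀ (by positivity)]
          linarith [h2]
        calc ((ν (ball y (Real.sqrt t))).toReal)⁻¹
            ≤ ((ν (ball y (Real.sqrt s))).toReal / (max Cd 1) ^ k)⁻¹ := by
              apply inv_anti₀ (by positivity) h3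
          _ = (max Cd 1) ^ k * ((ν (ball y (Real.sqrt s))).toReal)⁻¹ := by
              rw [inv_div]; ring
      -- exponent comparison
      have hexp : Real.exp (-(dist y x₁) ^ 2 / (c₃ * t)) ≤
          Real.exp (-(dist y x₁) ^ 2 / (c₁ * s)) := by
        apply Real.exp_le_exp.mpr
        rw [neg_div, neg_div, neg_le_neg_iff]
        have hcs : c₁ * s = max c₃ c₁ * t := by
          rw [hs_def, ha_def]; field_simp
        rw [hcs]
        apply div_le_div_of_nonneg_left (sq_nonneg _) (by positivity)
        exact mul_le_mul_of_nonneg_right (le_max_left _ _) ht.le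
      -- lower bound comparison
      have hlow : ((ν (ball y (Real.sqrt s))).toReal)⁻¹ *
          Real.exp (-(dist y x₁) ^ 2 / (c₁ * s)) ≤ C * T s y x₁ := by
        have hl := hlower s y x₁ hs
        have hid : C * (C⁻¹ * ((ν (ball y (Real.sqrt s))).toReal)⁻¹ *
            Real.exp (-(dist y x₁) ^ 2 / (c₁ * s))) =
            (C * C⁻¹) * (((ν (ball y (Real.sqrt s))).toReal)⁻¹ *
              Real.exp (-(dist y x₁) ^ 2 / (c₁ * s))) := by ring
        rw [mul_inv_cancel₀ hC.ne', one_mul] at hid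
        calc ((ν (ball y (Real.sqrt s))).toReal)⁻¹ *
              Real.exp (-(dist y x₁) ^ 2 / (c₁ * s))
            = C * (C⁻¹ * ((ν (ball y (Real.sqrt s))).toReal)⁻¹ *
                Real.exp (-(dist y x₁) ^ 2 / (c₁ * s))) := hid.symm
          _ ≤ C * T s y x₁ := mul_le_mul_of_nonneg_left hl hC.le
      -- put together: V⁻¹ * exp₃ ≤ (max Cd 1)^k * C * T s x₁ y
      have hKey : ((ν (ball y (Real.sqrt t))).toReal)⁻¹ *
          Real.exp (-(dist y x₁) ^ 2 / (c₃ * t)) ≤ (max Cd 1) ^ k * C * T s x₁ y := by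
        have hVsp := hball y (Real.sqrt s) hssq
        calc ((ν (ball y (Real.sqrt t))).toReal)⁻¹ *
              Real.exp (-(dist y x₁) ^ 2 / (c₃ * t))
            ≤ ((max Cd 1) ^ k * ((ν (ball y (Real.sqrt s))).toReal)⁻¹) *
              Real.exp (-(dist y x₁) ^ 2 / (c₁ * s)) :=
              mul_le_mul hVs hexp (Real.exp_pos _).le (by positivity)
          _ = (max Cd 1) ^ k * (((ν (ball y (Real.sqrt s))).toReal)⁻¹ *
              Real.exp (-(dist y x₁) ^ 2 / (c₁ * s))) := by ring
          _ ≤ (max Cd 1) ^ k * (C * T s y x₁) :=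
              mul_le_mul_of_nonneg_left hlow (by positivity)
          _ = (max Cd 1) ^ k * C * T s x₁ y := by rw [hTsym s y x₁]; ring
      -- combine
      rw [hre, mul_comm (ω y) _, abs_mul, abs_mul, abs_of_nonneg hωy.le]
      have hTs := (hTpos s x₁ y hs).le
      calc |T t y x₁ / (ω y * ω x₁) - T t y x₂ / (ω y * ω x₂)| * ω y * |ωt y|
          ≤ (C * (d / Real.sqrt t) ^ δ * ((ν (ball y (Real.sqrt t))).toReal)⁻¹ *
              Real.exp (-(dist y x₁) ^ 2 / (c₃ * t))) * C * M := by
            apply mul_le_mul _ (hωtb y) (abs_nonneg _)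
            · positivity
            · apply mul_le_mul hH (hω y).2 hωy.le
              have hVt := hball y (Real.sqrt t) hsq
              positivity
        _ = (C * (d / Real.sqrt t) ^ δ) * (((ν (ball y (Real.sqrt t))).toReal)⁻¹ *
              Real.exp (-(dist y x₁) ^ 2 / (c₃ * t))) * C * M := by ring
        _ ≤ (C * (d / Real.sqrt t) ^ δ) * ((max Cd 1) ^ k * C * T s x₁ y) * C * M := by
            apply mul_le_mul_of_nonneg_right _ hM
            apply mul_le_mul_of_nonneg_right _ hC.le
            exact mul_le_mul_of_nonneg_left hKey (by positivity)
        _ = (C ^ 3 * M * (max Cd 1) ^ k * ((d / Real.sqrt t) ^ δ)) * T s x₁ y := by ring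
    -- integrate the bound
    have hB : (0:ℝ) ≤ C ^ 3 * M * (max Cd 1) ^ k * ((d / Real.sqrt t) ^ δ) := by positivity
    calc |ωt x₁ / ω x₁ - ωt x₂ / ω x₂|
        = |∫ y, (T t x₁ y / ω x₁ - T t x₂ y / ω x₂) * ωt y ∂ν| := by rw [hint_eq]
      _ ≤ ∫ y, |(T t x₁ y / ω x₁ - T t x₂ y / ω x₂) * ωt y| ∂ν := by
          have h := norm_integral_le_integral_norm (μ := ν)
            (fun y => (T t x₁ y / ω x₁ - T t x₂ y / ω x₂) * ωt y)
          simpa only [Real.norm_eq_abs] using h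
      _ ≤ ∫ y, (C ^ 3 * M * (max Cd 1) ^ k * ((d / Real.sqrt t) ^ δ)) * T s x₁ y ∂ν := by
          exact integral_mono hFint.abs ((hIntT s x₁ hs).const_mul _) hptb
      _ = (C ^ 3 * M * (max Cd 1) ^ k * ((d / Real.sqrt t) ^ δ)) * ∫ y, T s x₁ y ∂ν := by
          rw [integral_const_mul _ _]
      _ ≤ (C ^ 3 * M * (max Cd 1) ^ k * ((d / Real.sqrt t) ^ δ)) * C ^ 2 :=
          mul_le_mul_of_nonneg_left (hTbound s x₁ hs) hB
      _ = C ^ 5 * M * (max Cd 1) ^ k * ((d / Real.sqrt t) ^ δ) := by ring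
  -- pass to the limit t → ∞
  have hsqrt_tendsto : Tendsto Real.sqrt atTop atTop := by
    apply tendsto_atTop_atTop.mpr
    intro b
    refine ⟨(max b 0) ^ 2, fun t ht => le_trans (le_max_left b 0) ?_⟩
    exact (Real.le_sqrt (le_max_right b 0) ((sq_nonneg _).trans ht)).mpr ht
  have hpow_tendsto : Tendsto (fun t : ℝ => (Real.sqrt t) ^ δ) atTop atTop :=
    (tendsto_rpow_atTop hδ).comp hsqrt_tendsto
  have hlim : Tendsto (fun t : ℝ =>
      C ^ 5 * M * (max Cd 1) ^ k * ((d / Real.sqrt t) ^ δ)) atTop (𝓝 0) := by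
    have h2 : Tendsto (fun t : ℝ => (d / Real.sqrt t) ^ δ) atTop (𝓝 0) := by
      have h3 : (fun t : ℝ => (d / Real.sqrt t) ^ δ) =
          fun t : ℝ => d ^ δ * ((Real.sqrt t) ^ δ)⁻¹ := by
        funext t
        rw [Real.div_rpow hd.le (Real.sqrt_nonneg t), div_eq_mul_inv]
      rw [h3]
      have := hpow_tendsto.inv_tendsto_atTop
      simpa using this.const_mul (d ^ δ)
    have := h2.const_mul (C ^ 5 * M * (max Cd 1) ^ k)
    simpa using this
  have habs : |ωt x₁ / ω x₁ - ωt x₂ / ω x₂| ≤ 0 := by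
    apply ge_of_tendsto hlim
    filter_upwards [eventually_gt_atTop (d ^ 2)] with t ht
    exact key t ht
  have := sub_eq_zero.mp (abs_nonpos_iff.mp habs)
  linarith [this]
end

section
/- If g is in BMO[μ,h] and a is an [μ,h]-atom, then |∫_X a(x) g(x) dμ(x)| ≤ ‖g‖_{BMO[μ,h]}, where the integral is independent of the representative of g modulo multiples of h. -/
open MeasureTheory Metric

/-!
Subtracting `c h` from `g` does not change `∫ a g`, by the cancellation `∫ a h = 0`, and on the
supporting ball of `a` the weighted Cauchy–Schwarz inequality with weights `h⁻¹` and `h` gives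
`∫ |a (g - c h)| ≤ ‖a‖_{L²(h⁻¹)} ‖g - c h‖_{L²(h)} ≤ μ_h(B)^{-1/2} (M + ε) μ_h(B)^{1/2}`.
-/

theorem ENNReal.rpow_half_mul_rpow_half_le {A H G k : ENNReal} (hAH : A * H ≤ 1)
    (hG : G ≤ k ^ 2 * H) : A ^ (1 / 2 : ℝ) * G ^ (1 / 2 : ℝ) ≤ k := by
  have hhalf : (0 : ℝ) ≤ 1 / 2 := by norm_num
  calc A ^ (1 / 2 : ℝ) * G ^ (1 / 2 : ℝ) ≤ A ^ (1 / 2 : ℝ) * (k ^ 2 * H) ^ (1 / 2 : ℝ) := by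
        gcongr
    _ = (A * H) ^ (1 / 2 : ℝ) * (k ^ 2) ^ (1 / 2 : ℝ) := by
        rw [ENNReal.mul_rpow_of_nonneg _ _ hhalf, ENNReal.mul_rpow_of_nonneg _ _ hhalf]
        ring
    _ ≤ 1 ^ (1 / 2 : ℝ) * (k ^ 2) ^ (1 / 2 : ℝ) := by gcongr
    _ = k := by
        rw [ENNReal.one_rpow, one_mul, ← ENNReal.rpow_natCast, ← ENNReal.rpow_mul]
        norm_num

section

variable {α : Type*} [MeasurableSpace α] {ν : Measure α}

theorem integral_mul_add_const_mul_eq {a g h : α → ℝ}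
    (hag : Integrable (fun x => a x * g x) ν) (hah : Integrable (fun x => a x * h x) ν)
    (hcancel : ∫ x, a x * h x ∂ν = 0) (c : ℝ) :
    ∫ x, a x * (g x + c * h x) ∂ν = ∫ x, a x * g x ∂ν := by
  simp_rw [mul_add, mul_left_comm (a _) c]
  rw [integral_add hag (hah.const_mul c), integral_const_mul, hcancel, mul_zero, add_zero]

theorem ENNReal.ofReal_rpow_two {x : ℝ} (hx : 0 ≤ x) :
    ENNReal.ofReal x ^ (2 : ℝ) = ENNReal.ofReal (x ^ 2) := by
  rw [ENNReal.ofReal_rpow_of_nonneg hx zero_le_two, Real.rpow_two]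

theorem lintegral_ofReal_abs_mul_le_weighted {a f w : α → ℝ} (ha : AEMeasurable a ν)
    (hf : AEMeasurable f ν) (hw : AEMeasurable w ν) (hw_pos : ∀ x, 0 < w x) :
    ∫⁻ x, ENNReal.ofReal |a x * f x| ∂ν ≤
      (∫⁻ x, ENNReal.ofReal (a x ^ 2 / w x) ∂ν) ^ (1 / 2 : ℝ) *
        (∫⁻ x, ENNReal.ofReal (f x ^ 2 * w x) ∂ν) ^ (1 / 2 : ℝ) := by
  set u : α → ENNReal := fun x => ENNReal.ofReal (|a x| / Real.sqrt (w x))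
  set v : α → ENNReal := fun x => ENNReal.ofReal (|f x| * Real.sqrt (w x))
  have hsqrt_pos : ∀ x, 0 < Real.sqrt (w x) := fun x => Real.sqrt_pos.mpr (hw_pos x)
  have hprod : ∀ x, ENNReal.ofReal |a x * f x| = (u * v) x := fun x => by
    simp only [u, v, Pi.mul_apply]
    rw [← ENNReal.ofReal_mul (by positivity), abs_mul]
    field_simp [(hsqrt_pos x).ne']
  have hu : ∀ x, u x ^ (2 : ℝ) = ENNReal.ofReal (a x ^ 2 / w x) := fun x => by
    rw [ENNReal.ofReal_rpow_two (by positivity), div_pow, sq_abs, Real.sq_sqrt (hw_pos x).le]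
  have hv : ∀ x, v x ^ (2 : ℝ) = ENNReal.ofReal (f x ^ 2 * w x) := fun x => by
    rw [ENNReal.ofReal_rpow_two (by positivity), mul_pow, sq_abs, Real.sq_sqrt (hw_pos x).le]
  have hu_meas : AEMeasurable u ν :=
    ENNReal.measurable_ofReal.comp_aemeasurable (ha.abs.div hw.sqrt)
  have hv_meas : AEMeasurable v ν :=
    ENNReal.measurable_ofReal.comp_aemeasurable (hf.abs.mul hw.sqrt)
  calc ∫⁻ x, ENNReal.ofReal |a x * f x| ∂ν = ∫⁻ x, (u * v) x ∂ν := lintegral_congr hprod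
    _ ≤ (∫⁻ x, u x ^ (2 : ℝ) ∂ν) ^ (1 / 2 : ℝ) * (∫⁻ x, v x ^ (2 : ℝ) ∂ν) ^ (1 / 2 : ℝ) :=
        ENNReal.lintegral_mul_le_Lp_mul_Lq ν Real.HolderConjugate.two_two hu_meas hv_meas
    _ = _ := by simp only [hu, hv]

theorem lintegral_ofReal_le_of_integral_le {F w : α → ℝ} {K : ℝ} (hF : Integrable F ν)
    (hF_nonneg : 0 ≤ᵐ[ν] F) (hw : AEStronglyMeasurable w ν) (hw_nonneg : 0 ≤ᵐ[ν] w)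
    (hK : 0 ≤ K) (hle : ∫ x, F x ∂ν ≤ K * ∫ x, w x ∂ν) :
    ∫⁻ x, ENNReal.ofReal (F x) ∂ν ≤ ENNReal.ofReal K * ∫⁻ x, ENNReal.ofReal (w x) ∂ν := by
  rw [← ofReal_integral_eq_lintegral_ofReal hF hF_nonneg]
  calc ENNReal.ofReal (∫ x, F x ∂ν) ≤ ENNReal.ofReal (K * ∫ x, w x ∂ν) :=
        ENNReal.ofReal_le_ofReal hle
    _ = ENNReal.ofReal K * ENNReal.ofReal (∫ x, w x ∂ν) := ENNReal.ofReal_mul hK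
    _ ≤ ENNReal.ofReal K * ∫⁻ x, ENNReal.ofReal (w x) ∂ν := by
        rw [integral_eq_lintegral_of_nonneg_ae hw_nonneg hw]
        gcongr
        exact ENNReal.ofReal_toReal_le

end

theorem stmt8_general {X : Type*} [MetricSpace X] [MeasurableSpace X]
    (μ : Measure X) (h : X → ℝ) (hmeas : Measurable h) (hpos : ∀ x, 0 < h x)
    (g : X → ℝ) (hgmeas : Measurable g) (M : ℝ) (hM : 0 ≤ M)
    (hBMO : ∀ (x : X) (r : ℝ), 0 < r → ∀ ε : ℝ, 0 < ε → ∃ c : ℝ,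
      Integrable (fun y => (g y - c * h y) ^ 2 * h y) (μ.restrict (ball x r)) ∧
      ∫ y in ball x r, (g y - c * h y) ^ 2 * h y ∂μ ≤
        (M + ε) ^ 2 * ∫ y in ball x r, h y ∂μ)
    (a : X → ℝ) (hameas : Measurable a)
    (x₀ : X) (r₀ : ℝ) (hr₀ : 0 < r₀)
    (hsupp : ∀ y, y ∉ ball x₀ r₀ → a y = 0)
    (hsize : (∫⁻ y in ball x₀ r₀, ENNReal.ofReal ((a y) ^ 2 / h y) ∂μ) *
      (∫⁻ y in ball x₀ r₀, ENNReal.ofReal (h y) ∂μ) ≤ 1)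
    (hah : Integrable (fun x => a x * h x) μ)
    (hcancel : ∫ x, a x * h x ∂μ = 0)
    (hag : Integrable (fun x => a x * g x) μ) :
    |∫ x, a x * g x ∂μ| ≤ M ∧
      ∀ c : ℝ, ∫ x, a x * (g x + c * h x) ∂μ = ∫ x, a x * g x ∂μ := by
  refine ⟨le_of_forall_pos_le_add fun ε hε => ?_, integral_mul_add_const_mul_eq hag hah hcancel⟩
  obtain ⟨c, hint, hbound⟩ := hBMO x₀ r₀ hr₀ ε hε
  have hshift : ∫ x, a x * g x ∂μ = ∫ x in ball x₀ r₀, a x * (g x - c * h x) ∂μ := by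
    rw [setIntegral_eq_integral_of_forall_compl_eq_zero fun y hy => by rw [hsupp y hy, zero_mul],
      ← integral_mul_add_const_mul_eq hag hah hcancel (-c)]
    simp_rw [neg_mul, ← sub_eq_add_neg]
  have hBMO_lintegral := lintegral_ofReal_le_of_integral_le hint
    (.of_forall fun y => mul_nonneg (sq_nonneg _) (hpos y).le) hmeas.aestronglyMeasurable
    (.of_forall fun y => (hpos y).le) (sq_nonneg _) hbound
  rw [hshift, ← Real.norm_eq_abs]
  refine (norm_integral_le_lintegral_norm _).trans
    (ENNReal.toReal_le_of_le_ofReal (by positivity) ?_)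
  simp_rw [Real.norm_eq_abs]
  refine (lintegral_ofReal_abs_mul_le_weighted hameas.aemeasurable
    (hgmeas.sub (hmeas.const_mul c)).aemeasurable hmeas.aemeasurable hpos).trans ?_
  refine ENNReal.rpow_half_mul_rpow_half_le hsize ?_
  rwa [← ENNReal.ofReal_pow (by positivity)]

/-- If `g ∈ BMO[μ,h]` with norm at most `M` (in the sup-inf sense) and `a` is an
`[μ,h]`-atom, then `|∫ a g dμ| ≤ M`; moreover the integral does not change when `g` is
replaced by `g + c h`. -/
theorem stmt8 {X : Type*} [MetricSpace X] [MeasurableSpace X] [BorelSpace X]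
    (μ : Measure X) (h : X → ℝ) (hmeas : Measurable h) (hpos : ∀ x, 0 < h x)
    (g : X → ℝ) (hgmeas : Measurable g) (M : ℝ) (hM : 0 ≤ M)
    (hBMO : ∀ (x : X) (r : ℝ), 0 < r → ∀ ε : ℝ, 0 < ε → ∃ c : ℝ,
      Integrable (fun y => (g y - c * h y) ^ 2 * h y) (μ.restrict (ball x r)) ∧
      ∫ y in ball x r, (g y - c * h y) ^ 2 * h y ∂μ ≤
        (M + ε) ^ 2 * ∫ y in ball x r, h y ∂μ)
    (a : X → ℝ) (hameas : Measurable a)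
    (x₀ : X) (r₀ : ℝ) (hr₀ : 0 < r₀)
    (hsupp : ∀ y, y ∉ ball x₀ r₀ → a y = 0)
    (hsize : (∫⁻ y in ball x₀ r₀, ENNReal.ofReal ((a y) ^ 2 / h y) ∂μ) *
      (∫⁻ y in ball x₀ r₀, ENNReal.ofReal (h y) ∂μ) ≤ 1)
    (hah : Integrable (fun x => a x * h x) μ)
    (hcancel : ∫ x, a x * h x ∂μ = 0)
    (hag : Integrable (fun x => a x * g x) μ) :
    |∫ x, a x * g x ∂μ| ≤ M ∧
      ∀ c : ℝ, ∫ x, a x * (g x + c * h x) ∂μ = ∫ x, a x * g x ∂μ :=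
  stmt8_general μ h hmeas hpos g hgmeas M hM hBMO a hameas x₀ r₀ hr₀ hsupp hsize hah hcancel hag
end

section
/- Let Ω ⊆ ℝⁿ be the region above the graph of a bounded Lipschitz function and ρ(x) = dist(x, Ω^c). For every q > 0, the measure with density ρ(x)^q on Ω satisfies ∫_{B(x,r)∩Ω} ρ(y)^q dy ≍ r^n (r + ρ(x))^q. Consequently, ρ^{-1} belongs to the Muckenhoupt class A_p of the measure ρ(x)^2 dx for every p > 1. -/
open MeasureTheory Metric
open scoped ENNReal NNReal

private lemma stmt10_aux_sq (a b t c : ℝ) (ha : 0 ≤ a) (ht : 0 ≤ t) (hc : 0 ≤ c)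
    (hb : t - c * a ≤ b) : t ^ 2 ≤ (1 + c ^ 2) * (a ^ 2 + b ^ 2) := by
  rcases le_or_gt t (c * a) with h | h
  · nlinarith [sq_nonneg b, sq_nonneg (c * a - t)]
  · have hb0 : 0 ≤ t - c * a := by linarith
    have h1 : (t - c * a) ^ 2 ≤ b ^ 2 := pow_le_pow_left₀ hb0 hb 2
    have h2 : (1 + c ^ 2) * (t - c * a) ^ 2 ≤ (1 + c ^ 2) * b ^ 2 :=
      mul_le_mul_of_nonneg_left h1 (by positivity)
    nlinarith [sq_nonneg ((1 + c ^ 2) * a - c * t), h2]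

set_option maxHeartbeats 1000000 in
/-- For the domain `Ω ⊆ ℝⁿ` above the graph of a bounded Lipschitz function and
`ρ(x) = dist(x, Ωᶜ)`: for every `q > 0`, `∫_{B(x,r)∩Ω} ρ^q ≍ r^n (r+ρ(x))^q`; consequently
`ρ⁻¹ ∈ A_p` of the measure `ρ² dx` for every `p > 1` (stated in the equivalent form
`sup_B (ν_ρ(B)/ν_{ρ²}(B)) (ν_{ρ^{2+1/(p-1)}}(B)/ν_{ρ²}(B))^{p-1} ≤ C`). -/
theorem stmt10 (d : ℕ) (hd : 1 ≤ d)
    (Γ : EuclideanSpace ℝ (Fin d) → ℝ)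
    (MΓ : ℝ) (hΓbdd : ∀ y, |Γ y| ≤ MΓ)
    (C₁ : ℝ≥0) (hΓlip : LipschitzWith C₁ Γ)
    (Ω : Set (EuclideanSpace ℝ (Fin (d + 1))))
    (hΩ : Ω = {x : EuclideanSpace ℝ (Fin (d + 1)) |
      Γ (WithLp.toLp 2 (fun i : Fin d => x i.castSucc)) < x (Fin.last d)}) :
    (∀ q : ℝ, 0 < q → ∃ C : ℝ, 0 < C ∧ ∀ x ∈ Ω, ∀ r : ℝ, 0 < r →
      ENNReal.ofReal (C⁻¹ * (r ^ (d + 1) * (r + Metric.infDist x Ωᶜ) ^ q)) ≤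
        (∫⁻ y in Metric.ball x r ∩ Ω, ENNReal.ofReal ((Metric.infDist y Ωᶜ) ^ q)) ∧
      (∫⁻ y in Metric.ball x r ∩ Ω, ENNReal.ofReal ((Metric.infDist y Ωᶜ) ^ q)) ≤
        ENNReal.ofReal (C * (r ^ (d + 1) * (r + Metric.infDist x Ωᶜ) ^ q))) ∧
    (∀ p : ℝ, 1 < p → ∃ C : ℝ, 0 < C ∧ ∀ x ∈ Ω, ∀ r : ℝ, 0 < r →
      ((∫⁻ y in Metric.ball x r ∩ Ω, ENNReal.ofReal (Metric.infDist y Ωᶜ)) /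
          (∫⁻ y in Metric.ball x r ∩ Ω, ENNReal.ofReal ((Metric.infDist y Ωᶜ) ^ (2 : ℝ)))) *
        ((∫⁻ y in Metric.ball x r ∩ Ω,
            ENNReal.ofReal ((Metric.infDist y Ωᶜ) ^ (2 + 1 / (p - 1)))) /
          (∫⁻ y in Metric.ball x r ∩ Ω,
            ENNReal.ofReal ((Metric.infDist y Ωᶜ) ^ (2 : ℝ)))) ^ (p - 1) ≤
        ENNReal.ofReal C) := by
  have hC1 : (0 : ℝ) ≤ (C₁ : ℝ) := C₁.coe_nonneg
  set κ : ℝ := Real.sqrt (1 + (C₁ : ℝ) ^ 2) with hκdef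
  have hκ1 : (1 : ℝ) ≤ κ := by
    rw [show (1 : ℝ) = Real.sqrt 1 by simp]
    exact Real.sqrt_le_sqrt (by nlinarith)
  have hκpos : (0 : ℝ) < κ := lt_of_lt_of_le one_pos hκ1
  have hκsq : κ ^ 2 = 1 + (C₁ : ℝ) ^ 2 := Real.sq_sqrt (by positivity)
  -- Ωᶜ is nonempty
  have hne : Ωᶜ.Nonempty := by
    refine ⟨EuclideanSpace.single (Fin.last d) (-(MΓ + 1)), ?_⟩
    subst hΩ
    simp only [Set.mem_compl_iff, Set.mem_setOf_eq, not_lt]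
    have h2 : (EuclideanSpace.single (Fin.last d) (-(MΓ + 1)) : EuclideanSpace ℝ (Fin (d+1)))
        (Fin.last d) = -(MΓ + 1) := by simp [EuclideanSpace.single_apply]
    rw [h2]
    have h3 := abs_le.mp (hΓbdd (WithLp.toLp 2 (fun i : Fin d =>
      (EuclideanSpace.single (Fin.last d) (-(MΓ + 1)) : EuclideanSpace ℝ (Fin (d+1))) i.castSucc)))
    linarith [h3.1]
  -- balls of radius infDist are inside Ω
  have hball : ∀ x : EuclideanSpace ℝ (Fin (d + 1)), ball x (infDist x Ωᶜ) ⊆ Ω := by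
    intro x y hy
    by_contra hyc
    have h1 : infDist x Ωᶜ ≤ dist x y := infDist_le_dist_of_mem hyc
    rw [mem_ball, dist_comm] at hy
    linarith
  -- the vertical push estimate
  have hkey : ∀ x ∈ Ω, ∀ t : ℝ, 0 ≤ t →
      t / κ ≤ infDist (x + t • (EuclideanSpace.single (Fin.last d) (1 : ℝ))) Ωᶜ := by
    intro x hx t ht
    set z : EuclideanSpace ℝ (Fin (d + 1)) :=
      x + t • (EuclideanSpace.single (Fin.last d) (1 : ℝ)) with hzdef
    by_contra hcon
    push_neg at hcon
    obtain ⟨w, hw, hdw⟩ := (infDist_lt_iff hne).mp hcon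
    -- coordinates of z
    have hzc : ∀ j : Fin d, z j.castSucc = x j.castSucc := by
      intro j
      simp [hzdef, PiLp.add_apply, PiLp.smul_apply, EuclideanSpace.single_apply,
        (Fin.castSucc_lt_last j).ne]
    have hzl : z (Fin.last d) = x (Fin.last d) + t := by
      simp [hzdef, PiLp.add_apply, PiLp.smul_apply, EuclideanSpace.single_apply]
    -- projections
    set x' : EuclideanSpace ℝ (Fin d) := WithLp.toLp 2 (fun j : Fin d => x j.castSucc) with hx'def
    set w' : EuclideanSpace ℝ (Fin d) := WithLp.toLp 2 (fun j : Fin d => w j.castSucc) with hw'def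
    set a : ℝ := dist x' w' with hadef
    have ha0 : 0 ≤ a := dist_nonneg
    have hasq : a ^ 2 = ∑ j : Fin d, dist (x j.castSucc) (w j.castSucc) ^ 2 := by
      rw [hadef, EuclideanSpace.dist_eq, Real.sq_sqrt (by positivity)]
    set b : ℝ := x (Fin.last d) + t - w (Fin.last d) with hbdef
    -- membership facts
    have hxΩ : Γ x' < x (Fin.last d) := by
      rw [hΩ] at hx; exact hx
    have hwΩ : w (Fin.last d) ≤ Γ w' := by
      rw [hΩ] at hw
      simpa only [Set.mem_compl_iff, Set.mem_setOf_eq, not_lt] using hw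
    have hΓest : |Γ x' - Γ w'| ≤ (C₁ : ℝ) * a := by
      have := hΓlip.dist_le_mul x' w'
      rwa [Real.dist_eq] at this
    have hb : t - (C₁ : ℝ) * a ≤ b := by
      have h1 : -((C₁ : ℝ) * a) ≤ Γ x' - Γ w' := neg_le_of_abs_le hΓest
      rw [hbdef]; linarith
    -- distance computation
    have hdist : dist z w = Real.sqrt (a ^ 2 + b ^ 2) := by
      rw [EuclideanSpace.dist_eq]
      congr 1
      rw [Fin.sum_univ_castSucc (fun i : Fin (d + 1) => dist (z i) (w i) ^ 2)]
      rw [hasq]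
      congr 1
      · exact Finset.sum_congr rfl fun j _ => by rw [hzc j]
      · rw [hzl, Real.dist_eq, sq_abs, hbdef]
    have hmain : t ^ 2 ≤ (1 + (C₁ : ℝ) ^ 2) * (a ^ 2 + b ^ 2) :=
      stmt10_aux_sq a b t (C₁ : ℝ) ha0 ht hC1 hb
    have hge : t / κ ≤ dist z w := by
      rw [hdist]
      rw [Real.le_sqrt (div_nonneg ht hκpos.le) (by positivity)]
      rw [div_pow, hκsq, div_le_iff₀ (by positivity)]
      linarith [hmain]
    linarith
  -- Part 1
  have main : ∀ q : ℝ, 0 < q → ∃ C : ℝ, 0 < C ∧ ∀ x ∈ Ω, ∀ r : ℝ, 0 < r →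
      ENNReal.ofReal (C⁻¹ * (r ^ (d + 1) * (r + Metric.infDist x Ωᶜ) ^ q)) ≤
        (∫⁻ y in Metric.ball x r ∩ Ω, ENNReal.ofReal ((Metric.infDist y Ωᶜ) ^ q)) ∧
      (∫⁻ y in Metric.ball x r ∩ Ω, ENNReal.ofReal ((Metric.infDist y Ωᶜ) ^ q)) ≤
        ENNReal.ofReal (C * (r ^ (d + 1) * (r + Metric.infDist x Ωᶜ) ^ q)) := by
    intro q hq
    set V : ℝ≥0∞ := volume (ball (0 : EuclideanSpace ℝ (Fin (d + 1))) 1) with hVdef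
    have hVpos : 0 < V := measure_ball_pos _ _ one_pos
    have hVlt : V < ⊤ := measure_ball_lt_top
    set v : ℝ := V.toReal with hvdef
    have hvpos : 0 < v := ENNReal.toReal_pos hVpos.ne' hVlt.ne
    have hVeq : V = ENNReal.ofReal v := (ENNReal.ofReal_toReal hVlt.ne).symm
    set δ : ℝ := 1 / (4 * κ) with hδdef
    have hδpos : 0 < δ := div_pos one_pos (by linarith)
    have hδ2pos : 0 < δ / 2 := half_pos hδpos
    have hδle : δ ≤ 1 / 4 := by
      rw [hδdef, div_le_div_iff₀ (by linarith) (by norm_num)]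
      nlinarith
    set c0 : ℝ := (δ / 2) ^ q * (δ / 2) ^ (d + 1) * v with hc0def
    have hc0pos : 0 < c0 :=
      mul_pos (mul_pos (Real.rpow_pos_of_pos hδ2pos q) (pow_pos hδ2pos _)) hvpos
    refine ⟨v + c0⁻¹, add_pos hvpos (inv_pos.mpr hc0pos), ?_⟩
    intro x hx r hr
    set R : ℝ := infDist x Ωᶜ with hRdef
    have hR0 : 0 ≤ R := infDist_nonneg
    have hrR : 0 < r + R := by linarith
    have hmeas : Measurable fun y : EuclideanSpace ℝ (Fin (d + 1)) =>
        ENNReal.ofReal (infDist y Ωᶜ ^ q) :=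
      (((continuous_infDist_pt Ωᶜ).rpow_const fun y => Or.inr hq.le).measurable).ennreal_ofReal
    constructor
    · -- lower bound
      obtain ⟨z, hzx, hzρ⟩ : ∃ z : EuclideanSpace ℝ (Fin (d + 1)),
          dist z x ≤ r / 2 ∧ δ * (r + R) ≤ infDist z Ωᶜ := by
        rcases le_or_gt r R with h | h
        · refine ⟨x, by rw [dist_self]; positivity, ?_⟩
          rw [← hRdef]
          nlinarith [mul_le_mul_of_nonneg_right hδle hrR.le]
        · refine ⟨x + (r / 2) • (EuclideanSpace.single (Fin.last d) (1 : ℝ)), ?_, ?_⟩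
          · rw [dist_self_add_left, norm_smul, EuclideanSpace.norm_single]
            simp only [Real.norm_eq_abs, norm_one, mul_one]
            rw [abs_of_nonneg (half_pos hr).le]
          · have h1 := hkey x hx (r / 2) (half_pos hr).le
            refine le_trans ?_ h1
            have e1 : δ * (r + R) = (r + R) / (4 * κ) := by rw [hδdef]; ring
            have e2 : r / 2 / κ = r / (2 * κ) := by ring
            rw [e1, e2, div_le_div_iff₀ (by linarith) (by linarith)]
            nlinarith [mul_le_mul_of_nonneg_right (show r + R ≤ 2 * r by linarith)
              (by linarith : (0:ℝ) ≤ 2 * κ)]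
      have hz0 : 0 < infDist z Ωᶜ := lt_of_lt_of_le (mul_pos hδpos hrR) hzρ
      set s : ℝ := (δ / 2) * r with hsdef
      have hs0 : 0 < s := mul_pos hδ2pos hr
      have hsle : s ≤ infDist z Ωᶜ := by
        refine le_trans ?_ hzρ
        rw [hsdef]
        nlinarith [mul_nonneg hδpos.le hR0, mul_nonneg hδpos.le hr.le]
      have hsub : ball z s ⊆ ball x r ∩ Ω := by
        intro y hy
        rw [mem_ball] at hy
        constructor
        · rw [mem_ball]
          calc dist y x ≤ dist y z + dist z x := dist_triangle y z x
            _ < s + r / 2 := by linarith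
            _ ≤ r := by
                rw [hsdef]
                nlinarith [mul_le_mul_of_nonneg_right hδle hr.le]
        · exact hball z (mem_ball.mpr (lt_of_lt_of_le hy hsle))
      have hlow : ∀ y ∈ ball z s, (δ / 2) * (r + R) ≤ infDist y Ωᶜ := by
        intro y hy
        have h1 : infDist z Ωᶜ ≤ infDist y Ωᶜ + dist z y := infDist_le_infDist_add_dist
        have h2 : dist z y < s := by rw [mem_ball] at hy; rwa [dist_comm]
        rw [hsdef] at h2
        nlinarith [mul_nonneg hδpos.le hR0]
      calc ENNReal.ofReal ((v + c0⁻¹)⁻¹ * (r ^ (d + 1) * (r + R) ^ q))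
          ≤ ENNReal.ofReal (((δ / 2) * (r + R)) ^ q * (s ^ (d + 1) * v)) := by
            apply ENNReal.ofReal_le_ofReal
            have hkey2 : ((δ / 2) * (r + R)) ^ q * (s ^ (d + 1) * v)
                = c0 * (r ^ (d + 1) * (r + R) ^ q) := by
              rw [Real.mul_rpow hδ2pos.le hrR.le, hsdef, mul_pow, hc0def]
              ring
            rw [hkey2]
            have hinv : (v + c0⁻¹)⁻¹ ≤ c0 := by
              have h1 : c0⁻¹ ≤ v + c0⁻¹ := le_add_of_nonneg_left hvpos.le
              calc (v + c0⁻¹)⁻¹ ≤ (c0⁻¹)⁻¹ := inv_anti₀ (inv_pos.mpr hc0pos) h1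
                _ = c0 := inv_inv c0
            have hX : (0 : ℝ) ≤ r ^ (d + 1) * (r + R) ^ q :=
              mul_nonneg (pow_nonneg hr.le _) (Real.rpow_nonneg hrR.le q)
            exact mul_le_mul_of_nonneg_right hinv hX
        _ = ENNReal.ofReal (((δ / 2) * (r + R)) ^ q) *
              (ENNReal.ofReal (s ^ (d + 1)) * V) := by
            rw [hVeq, ← ENNReal.ofReal_mul (pow_nonneg hs0.le _),
              ← ENNReal.ofReal_mul (Real.rpow_nonneg (mul_nonneg hδ2pos.le hrR.le) q)]
        _ = ENNReal.ofReal (((δ / 2) * (r + R)) ^ q) * volume (ball z s) := by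
            rw [Measure.addHaar_ball volume z hs0.le, finrank_euclideanSpace_fin]
        _ = ∫⁻ _ in ball z s, ENNReal.ofReal (((δ / 2) * (r + R)) ^ q) := by
            rw [setLIntegral_const]
        _ ≤ ∫⁻ y in ball z s, ENNReal.ofReal (infDist y Ωᶜ ^ q) := by
            refine setLIntegral_mono hmeas fun y hy => ?_
            exact ENNReal.ofReal_le_ofReal
              (Real.rpow_le_rpow (mul_nonneg hδ2pos.le hrR.le) (hlow y hy) hq.le)
        _ ≤ ∫⁻ y in ball x r ∩ Ω, ENNReal.ofReal (infDist y Ωᶜ ^ q) :=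
            lintegral_mono_set hsub
    · -- upper bound
      calc (∫⁻ y in ball x r ∩ Ω, ENNReal.ofReal (infDist y Ωᶜ ^ q))
          ≤ ∫⁻ _ in ball x r ∩ Ω, ENNReal.ofReal ((r + R) ^ q) := by
            refine setLIntegral_mono measurable_const fun y hy => ?_
            refine ENNReal.ofReal_le_ofReal (Real.rpow_le_rpow infDist_nonneg ?_ hq.le)
            have h1 : infDist y Ωᶜ ≤ infDist x Ωᶜ + dist y x := infDist_le_infDist_add_dist
            have h2 : dist y x < r := mem_ball.mp hy.1
            rw [← hRdef] at h1
            linarith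
        _ = ENNReal.ofReal ((r + R) ^ q) * volume (ball x r ∩ Ω) := setLIntegral_const _ _
        _ ≤ ENNReal.ofReal ((r + R) ^ q) * volume (ball x r) :=
            mul_le_mul' le_rfl (measure_mono Set.inter_subset_left)
        _ = ENNReal.ofReal ((r + R) ^ q) * (ENNReal.ofReal (r ^ (d + 1)) * V) := by
            rw [Measure.addHaar_ball volume x hr.le, finrank_euclideanSpace_fin]
        _ = ENNReal.ofReal ((r + R) ^ q * (r ^ (d + 1) * v)) := by
            rw [hVeq, ← ENNReal.ofReal_mul (pow_nonneg hr.le _),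
              ← ENNReal.ofReal_mul (Real.rpow_nonneg hrR.le q)]
        _ ≤ ENNReal.ofReal ((v + c0⁻¹) * (r ^ (d + 1) * (r + R) ^ q)) := by
            apply ENNReal.ofReal_le_ofReal
            have h1 : (0 : ℝ) ≤ (r + R) ^ q := Real.rpow_nonneg hrR.le q
            have h2 : (0 : ℝ) < c0⁻¹ := inv_pos.mpr hc0pos
            nlinarith [mul_nonneg (mul_nonneg h2.le (pow_pos hr (d + 1)).le) h1]
  refine ⟨main, ?_⟩
  -- Part 2
  intro p hp
  have hp1 : 0 < p - 1 := by linarith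
  obtain ⟨Ca, hCa, Ha⟩ := main 1 one_pos
  obtain ⟨Cb, hCb, Hb⟩ := main 2 two_pos
  have hq3 : (0 : ℝ) < 2 + 1 / (p - 1) := by positivity
  obtain ⟨Cc, hCc, Hc⟩ := main (2 + 1 / (p - 1)) hq3
  refine ⟨Ca * Cb * (Cc * Cb) ^ (p - 1),
    mul_pos (mul_pos hCa hCb) (Real.rpow_pos_of_pos (mul_pos hCc hCb) _), ?_⟩
  intro x hx r hr
  set R : ℝ := infDist x Ωᶜ with hRdef
  have hR0 : 0 ≤ R := infDist_nonneg
  have hrR : 0 < r + R := by linarith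
  obtain ⟨-, ha2⟩ := Ha x hx r hr
  obtain ⟨hb1, -⟩ := Hb x hx r hr
  obtain ⟨-, hc2⟩ := Hc x hx r hr
  rw [← hRdef] at ha2 hb1 hc2
  have ea2 : (∫⁻ y in ball x r ∩ Ω, ENNReal.ofReal (infDist y Ωᶜ)) ≤
      ENNReal.ofReal (Ca * (r ^ (d + 1) * (r + R))) := by
    simpa [Real.rpow_one] using ha2
  have h2R : (r + R) ^ (2 : ℝ) = (r + R) * (r + R) := by
    rw [show (2 : ℝ) = ((2 : ℕ) : ℝ) by norm_num, Real.rpow_natCast]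
    ring
  have hrpow : (0 : ℝ) < r ^ (d + 1) := pow_pos hr _
  have hdenpos : (0 : ℝ) < Cb⁻¹ * (r ^ (d + 1) * (r + R) ^ (2 : ℝ)) := by
    refine mul_pos (inv_pos.mpr hCb) (mul_pos hrpow ?_)
    rw [h2R]; exact mul_pos hrR hrR
  -- first ratio
  have hr1 : (∫⁻ y in ball x r ∩ Ω, ENNReal.ofReal (infDist y Ωᶜ)) /
        (∫⁻ y in ball x r ∩ Ω, ENNReal.ofReal (infDist y Ωᶜ ^ (2 : ℝ))) ≤
      ENNReal.ofReal (Ca * Cb / (r + R)) := by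
    calc (∫⁻ y in ball x r ∩ Ω, ENNReal.ofReal (infDist y Ωᶜ)) /
          (∫⁻ y in ball x r ∩ Ω, ENNReal.ofReal (infDist y Ωᶜ ^ (2 : ℝ)))
        ≤ ENNReal.ofReal (Ca * (r ^ (d + 1) * (r + R))) /
            ENNReal.ofReal (Cb⁻¹ * (r ^ (d + 1) * (r + R) ^ (2 : ℝ))) :=
          ENNReal.div_le_div ea2 hb1
      _ = ENNReal.ofReal ((Ca * (r ^ (d + 1) * (r + R))) /
            (Cb⁻¹ * (r ^ (d + 1) * (r + R) ^ (2 : ℝ)))) :=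
          (ENNReal.ofReal_div_of_pos hdenpos).symm
      _ = ENNReal.ofReal (Ca * Cb / (r + R)) := by
          congr 1
          rw [h2R]
          field_simp
  -- second ratio
  have hadd : (r + R) ^ (2 + 1 / (p - 1)) = (r + R) ^ (2 : ℝ) * (r + R) ^ (1 / (p - 1)) :=
    Real.rpow_add hrR 2 (1 / (p - 1))
  have hr2 : (∫⁻ y in ball x r ∩ Ω, ENNReal.ofReal (infDist y Ωᶜ ^ (2 + 1 / (p - 1)))) /
        (∫⁻ y in ball x r ∩ Ω, ENNReal.ofReal (infDist y Ωᶜ ^ (2 : ℝ))) ≤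
      ENNReal.ofReal (Cc * Cb * (r + R) ^ (1 / (p - 1))) := by
    calc (∫⁻ y in ball x r ∩ Ω, ENNReal.ofReal (infDist y Ωᶜ ^ (2 + 1 / (p - 1)))) /
          (∫⁻ y in ball x r ∩ Ω, ENNReal.ofReal (infDist y Ωᶜ ^ (2 : ℝ)))
        ≤ ENNReal.ofReal (Cc * (r ^ (d + 1) * (r + R) ^ (2 + 1 / (p - 1)))) /
            ENNReal.ofReal (Cb⁻¹ * (r ^ (d + 1) * (r + R) ^ (2 : ℝ))) :=
          ENNReal.div_le_div hc2 hb1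
      _ = ENNReal.ofReal ((Cc * (r ^ (d + 1) * (r + R) ^ (2 + 1 / (p - 1)))) /
            (Cb⁻¹ * (r ^ (d + 1) * (r + R) ^ (2 : ℝ)))) :=
          (ENNReal.ofReal_div_of_pos hdenpos).symm
      _ = ENNReal.ofReal (Cc * Cb * (r + R) ^ (1 / (p - 1))) := by
          congr 1
          have h2pos : (0 : ℝ) < (r + R) ^ (2 : ℝ) := by
            rw [h2R]; exact mul_pos hrR hrR
          rw [hadd]
          field_simp
  -- combine
  have hrp : ((r + R) ^ (1 / (p - 1))) ^ (p - 1) = r + R := by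
    rw [← Real.rpow_mul hrR.le, one_div, inv_mul_cancel₀ hp1.ne', Real.rpow_one]
  have hnn2 : (0 : ℝ) ≤ Cc * Cb * (r + R) ^ (1 / (p - 1)) :=
    mul_nonneg (mul_nonneg hCc.le hCb.le) (Real.rpow_nonneg hrR.le _)
  calc ((∫⁻ y in ball x r ∩ Ω, ENNReal.ofReal (infDist y Ωᶜ)) /
        (∫⁻ y in ball x r ∩ Ω, ENNReal.ofReal (infDist y Ωᶜ ^ (2 : ℝ)))) *
      ((∫⁻ y in ball x r ∩ Ω, ENNReal.ofReal (infDist y Ωᶜ ^ (2 + 1 / (p - 1)))) /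
        (∫⁻ y in ball x r ∩ Ω, ENNReal.ofReal (infDist y Ωᶜ ^ (2 : ℝ)))) ^ (p - 1)
      ≤ ENNReal.ofReal (Ca * Cb / (r + R)) *
          (ENNReal.ofReal (Cc * Cb * (r + R) ^ (1 / (p - 1)))) ^ (p - 1) :=
        mul_le_mul' hr1 (ENNReal.rpow_le_rpow hr2 hp1.le)
    _ = ENNReal.ofReal (Ca * Cb / (r + R)) *
          ENNReal.ofReal ((Cc * Cb * (r + R) ^ (1 / (p - 1))) ^ (p - 1)) := by
        rw [ENNReal.ofReal_rpow_of_nonneg hnn2 hp1.le]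
    _ = ENNReal.ofReal ((Ca * Cb / (r + R)) *
          (Cc * Cb * (r + R) ^ (1 / (p - 1))) ^ (p - 1)) :=
        (ENNReal.ofReal_mul (div_nonneg (mul_nonneg hCa.le hCb.le) hrR.le)).symm
    _ = ENNReal.ofReal (Ca * Cb * (Cc * Cb) ^ (p - 1)) := by
        congr 1
        rw [Real.mul_rpow (mul_nonneg hCc.le hCb.le) (Real.rpow_nonneg hrR.le _), hrp]
        field_simp
end

section
/- Let Ω ⊆ ℝⁿ be the exterior of a bounded convex set, and h̃(x) = min(1, dist(x, Ω^c)). Then the measure σ_q with density h̃(x)^q dx, q > 0, satisfies: σ_q(B(x,r)) ≍ r^n if r ≥ 1 or dist(x,Ω^c) ≥ 1, and σ_q(B(x,r)) ≍ r^n (r + dist(x,Ω^c))^q if r ≤ 1 and dist(x,Ω^c) ≤ 1. -/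
open MeasureTheory Metric
open scoped ENNReal

/-- Key geometric lemma: near any exterior point there is a ball of comparable radius,
inside the big ball, on which the distance to `K` is at least `infDist x K + r/4`. -/
lemma stmt11_aux {n : ℕ} (K : Set (EuclideanSpace ℝ (Fin n))) (hK : IsCompact K)
    (hKconv : Convex ℝ K) (hne : K.Nonempty) {x : EuclideanSpace ℝ (Fin n)} (hx : x ∉ K)
    {r : ℝ} (hr : 0 < r) :
    ∃ z, ball z (r/4) ⊆ ball x r ∧
      ∀ y ∈ ball z (r/4), Metric.infDist x K + r/4 ≤ Metric.infDist y K := by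
  haveI := hne.to_subtype
  obtain ⟨p, hpK, hp⟩ := hK.exists_infDist_eq_dist hne x
  have hρpos : 0 < Metric.infDist x K :=
    (hK.isClosed.notMem_iff_infDist_pos hne).1 hx
  set ρ : ℝ := Metric.infDist x K with hρ
  have hxp : ρ = ‖x - p‖ := by rw [hp, dist_eq_norm]
  have hxpne : ‖x - p‖ ≠ 0 := by rw [← hxp]; exact hρpos.ne'
  set u : EuclideanSpace ℝ (Fin n) := ρ⁻¹ • (x - p) with hu
  have hnu : ‖u‖ = 1 := by
    rw [hu, norm_smul, Real.norm_eq_abs, abs_inv, abs_of_pos hρpos, hxp,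
      inv_mul_cancel₀ hxpne]
  -- obtuse angle criterion
  have hxinf : ‖x - p‖ = ⨅ w : K, ‖x - (w : EuclideanSpace ℝ (Fin n))‖ := by
    rw [← dist_eq_norm x p, ← hp, hρ, Metric.infDist_eq_iInf]
    simp only [dist_eq_norm]
  have hobtuse : ∀ w ∈ K, inner ℝ (x - p) (w - p) ≤ (0:ℝ) :=
    (norm_eq_iInf_iff_real_inner_le_zero hKconv hpK).1 hxinf
  have hvu : inner ℝ (x - p) u = ρ := by
    rw [hu, real_inner_smul_right, real_inner_self_eq_norm_sq, ← hxp, sq]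
    field_simp
  have huu : inner ℝ u u = (1:ℝ) := by
    rw [real_inner_self_eq_norm_sq, hnu]; norm_num
  refine ⟨x + (r/2) • u, ?_, ?_⟩
  · intro y hy
    rw [mem_ball] at hy ⊢
    have hdzx : dist (x + (r/2) • u) x = r/2 := by
      rw [dist_eq_norm, add_sub_cancel_left, norm_smul, hnu, Real.norm_eq_abs,
        abs_of_pos (by linarith)]
      ring
    calc dist y x ≤ dist y (x + (r/2) • u) + dist (x + (r/2) • u) x := dist_triangle _ _ _
      _ < r/4 + r/2 := by rw [hdzx]; linarith [hy]
      _ ≤ r := by linarith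
  · intro y hy
    rw [mem_ball, dist_eq_norm] at hy
    rw [Metric.infDist_eq_iInf]
    refine le_ciInf fun ⟨k, hk⟩ => ?_
    simp only [dist_eq_norm]
    have hdecomp : y - k = (y - (x + (r/2) • u)) + (r/2) • u + (x - p) + (p - k) := by
      abel
    have hinner : ρ + r/4 ≤ inner ℝ (y - k) u := by
      rw [hdecomp]
      have h1 : inner ℝ (y - (x + (r/2) • u)) u ≥ -(r/4) := by
        have := real_inner_le_norm (-(y - (x + (r/2) • u))) u
        rw [inner_neg_left, hnu, mul_one] at this
        have hn := hy.le
        nlinarith [norm_neg (y - (x + (r/2) • u))]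
      have h2 : inner ℝ ((r/2) • u) u = r/2 := by
        rw [real_inner_smul_left, huu]; ring
      have h4 : (0:ℝ) ≤ inner ℝ (p - k) u := by
        have h5 : inner ℝ (p - k) u = ρ⁻¹ * inner ℝ (x - p) (p - k) := by
          rw [hu, real_inner_smul_right, real_inner_comm]
        have h6 : inner ℝ (x - p) (p - k) = -(inner ℝ (x - p) (k - p) : ℝ) := by
          rw [← inner_neg_right]; congr 1; abel
        rw [h5, h6]
        have h7 := hobtuse k hk
        exact mul_nonneg (inv_nonneg.mpr hρpos.le) (by linarith)
      rw [inner_add_left, inner_add_left, inner_add_left, h2, hvu]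
      linarith
    calc ρ + r/4 ≤ inner ℝ (y - k) u := hinner
      _ ≤ ‖y - k‖ * ‖u‖ := real_inner_le_norm _ _
      _ = ‖y - k‖ := by rw [hnu, mul_one]

/-- For `Ω` the exterior of a compact convex body in `ℝⁿ`, `ρ(x) = dist(x,Ωᶜ)` and
`h̃ = min(1,ρ)`, the measure `σ_q` with density `h̃^q` satisfies `σ_q(B(x,r)) ≍ r^n` when
`r ≥ 1` or `ρ(x) ≥ 1`, and `σ_q(B(x,r)) ≍ r^n (r+ρ(x))^q` when `r ≤ 1` and `ρ(x) ≤ 1`. -/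
theorem stmt11 (n : ℕ)
    (K : Set (EuclideanSpace ℝ (Fin n))) (hK : IsCompact K) (hKconv : Convex ℝ K)
    (hKint : (interior K).Nonempty)
    (Ω : Set (EuclideanSpace ℝ (Fin n))) (hΩ : Ω = Kᶜ) :
    ∀ q : ℝ, 0 < q → ∃ C : ℝ, 0 < C ∧ ∀ x ∈ Ω, ∀ r : ℝ, 0 < r →
      ((1 ≤ r ∨ 1 ≤ Metric.infDist x Ωᶜ) →
        (ENNReal.ofReal (C⁻¹ * r ^ n) ≤
          (∫⁻ y in Metric.ball x r ∩ Ω,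
            ENNReal.ofReal ((min 1 (Metric.infDist y Ωᶜ)) ^ q)) ∧
        (∫⁻ y in Metric.ball x r ∩ Ω,
            ENNReal.ofReal ((min 1 (Metric.infDist y Ωᶜ)) ^ q)) ≤
          ENNReal.ofReal (C * r ^ n))) ∧
      ((r ≤ 1 ∧ Metric.infDist x Ωᶜ ≤ 1) →
        (ENNReal.ofReal (C⁻¹ * (r ^ n * (r + Metric.infDist x Ωᶜ) ^ q)) ≤
          (∫⁻ y in Metric.ball x r ∩ Ω,
            ENNReal.ofReal ((min 1 (Metric.infDist y Ωᶜ)) ^ q)) ∧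
        (∫⁻ y in Metric.ball x r ∩ Ω,
            ENNReal.ofReal ((min 1 (Metric.infDist y Ωᶜ)) ^ q)) ≤
          ENNReal.ofReal (C * (r ^ n * (r + Metric.infDist x Ωᶜ) ^ q)))) := by
  subst hΩ
  simp only [compl_compl]
  intro q hq
  have hne : K.Nonempty := hKint.mono interior_subset
  rcases Nat.eq_zero_or_pos n with hn | hn
  · -- degenerate case: the space is a point, `Kᶜ` is empty
    subst hn
    refine ⟨1, one_pos, fun x hx => ?_⟩
    exfalso
    obtain ⟨k, hk⟩ := hne
    have : x = k := Subsingleton.elim x k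
    exact hx (this ▸ hk)
  haveI : Nontrivial (EuclideanSpace ℝ (Fin n)) := by
    apply Module.nontrivial_of_finrank_pos (R := ℝ)
    rw [finrank_euclideanSpace_fin]; exact hn
  set c0 : ℝ≥0∞ := volume (ball (0:EuclideanSpace ℝ (Fin n)) 1) with hc0
  have hc0pos : 0 < c0 := measure_ball_pos _ _ one_pos
  have hc0top : c0 ≠ ⊤ := measure_ball_lt_top.ne
  set cR : ℝ := c0.toReal with hcR
  have hcRpos : 0 < cR := ENNReal.toReal_pos hc0pos.ne' hc0top
  have hc0eq : c0 = ENNReal.ofReal cR := (ENNReal.ofReal_toReal hc0top).symm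
  have h4q : (0:ℝ) < (4:ℝ) ^ q := Real.rpow_pos_of_pos (by norm_num) q
  have h4n : (0:ℝ) < (4:ℝ) ^ n := by positivity
  set C : ℝ := cR + (4:ℝ)^n * (4:ℝ)^q / cR with hC
  have hCpos : 0 < C := by positivity
  have hCc : cR ≤ C := by
    rw [hC]
    have : 0 ≤ (4:ℝ)^n * (4:ℝ)^q / cR := by positivity
    linarith
  have hCinv : C⁻¹ ≤ cR / ((4:ℝ)^n * (4:ℝ)^q) := by
    rw [← inv_inv (cR / ((4:ℝ)^n * (4:ℝ)^q))]
    apply inv_anti₀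
    · positivity
    · rw [inv_div]
      have h0 : 0 ≤ cR := hcRpos.le
      have h1 : (4:ℝ)^n * (4:ℝ)^q / cR ≤ cR + (4:ℝ)^n * (4:ℝ)^q / cR := by linarith
      exact h1
  have hmeas : Measurable fun y : EuclideanSpace ℝ (Fin n) => ENNReal.ofReal ((min 1 (Metric.infDist y K)) ^ q) := by
    apply ENNReal.measurable_ofReal.comp
    apply Continuous.measurable
    apply Continuous.rpow_const
    · exact continuous_const.min (continuous_infDist_pt K)
    · exact fun _ => Or.inr hq.le
  have hfinrank : Module.finrank ℝ (EuclideanSpace ℝ (Fin n)) = n := finrank_euclideanSpace_fin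
  refine ⟨C, hCpos, fun x hx r hr => ?_⟩
  set ρ : ℝ := Metric.infDist x K with hρ
  have hρpos : 0 < ρ := (hK.isClosed.notMem_iff_infDist_pos hne).1 hx
  -- volume of balls
  have hvol : ∀ (z : EuclideanSpace ℝ (Fin n)) (s : ℝ), 0 < s →
      volume (ball z s) = ENNReal.ofReal (s ^ n * cR) := by
    intro z s hs
    rw [Measure.addHaar_ball volume z hs.le, hfinrank, ← hc0, hc0eq,
      ← ENNReal.ofReal_mul (by positivity)]
  -- generic upper bound
  have hupper : ∀ A : ℝ, 0 ≤ A →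
      (∀ y ∈ ball x r ∩ Kᶜ, min 1 (Metric.infDist y K) ≤ A) →
      (∫⁻ y in ball x r ∩ Kᶜ, ENNReal.ofReal ((min 1 (Metric.infDist y K)) ^ q)) ≤
        ENNReal.ofReal (A ^ q * (r ^ n * cR)) := by
    intro A hA hbound
    calc (∫⁻ y in ball x r ∩ Kᶜ, ENNReal.ofReal ((min 1 (Metric.infDist y K)) ^ q))
        ≤ ∫⁻ _ in ball x r ∩ Kᶜ, ENNReal.ofReal (A ^ q) := by
          apply setLIntegral_mono measurable_const
          intro y hy
          apply ENNReal.ofReal_le_ofReal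
          exact Real.rpow_le_rpow (le_min zero_le_one Metric.infDist_nonneg)
            (hbound y hy) hq.le
      _ = ENNReal.ofReal (A ^ q) * volume (ball x r ∩ Kᶜ) := setLIntegral_const _ _
      _ ≤ ENNReal.ofReal (A ^ q) * volume (ball x r) := by
          gcongr
          exact Set.inter_subset_left
      _ = ENNReal.ofReal (A ^ q) * ENNReal.ofReal (r ^ n * cR) := by rw [hvol x r hr]
      _ = ENNReal.ofReal (A ^ q * (r ^ n * cR)) := by
          rw [← ENNReal.ofReal_mul (by positivity)]
  -- generic lower bound
  obtain ⟨z, hzsub, hzdist⟩ := stmt11_aux K hK hKconv hne hx hr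
  have hzΩ : ball z (r/4) ⊆ Kᶜ := by
    intro y hy
    intro hyK
    have h1 := hzdist y hy
    rw [infDist_zero_of_mem hyK] at h1
    linarith
  have hlower : ∀ m : ℝ, 0 ≤ m →
      (∀ y ∈ ball z (r/4), m ≤ min 1 (Metric.infDist y K)) →
      ENNReal.ofReal (m ^ q * ((r/4) ^ n * cR)) ≤
      (∫⁻ y in ball x r ∩ Kᶜ, ENNReal.ofReal ((min 1 (Metric.infDist y K)) ^ q)) := by
    intro m hm hbound
    have hsub : ball z (r/4) ⊆ ball x r ∩ Kᶜ := Set.subset_inter hzsub hzΩ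
    calc ENNReal.ofReal (m ^ q * ((r/4) ^ n * cR))
        = ENNReal.ofReal (m ^ q) * ENNReal.ofReal ((r/4) ^ n * cR) := by
          rw [← ENNReal.ofReal_mul (by positivity)]
      _ = ENNReal.ofReal (m ^ q) * volume (ball z (r/4)) := by
          rw [hvol z (r/4) (by linarith)]
      _ = ∫⁻ _ in ball z (r/4), ENNReal.ofReal (m ^ q) := (setLIntegral_const _ _).symm
      _ ≤ ∫⁻ y in ball z (r/4), ENNReal.ofReal ((min 1 (Metric.infDist y K)) ^ q) := by
          apply setLIntegral_mono hmeas
          intro y hy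
          exact ENNReal.ofReal_le_ofReal (Real.rpow_le_rpow hm (hbound y hy) hq.le)
      _ ≤ _ := lintegral_mono_set hsub
  constructor
  · -- case 1 : r ≥ 1 or ρ ≥ 1
    intro hcase
    have hρr1 : 1 ≤ ρ + r ∧ 1 ≤ r + ρ := by
      rcases hcase with h | h
      · constructor <;> linarith
      · constructor <;> linarith
    constructor
    · -- lower bound
      have hb : ∀ y ∈ ball z (r/4), (1/4 : ℝ) ≤ min 1 (Metric.infDist y K) := by
        intro y hy
        have h1 := hzdist y hy
        apply le_min (by norm_num)
        have : (1:ℝ)/4 ≤ ρ + r/4 := by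
          rcases hcase with h | h
          · linarith
          · linarith
        linarith
      refine le_trans ?_ (hlower (1/4) (by norm_num) hb)
      apply ENNReal.ofReal_le_ofReal
      have h14 : ((1:ℝ)/4) ^ q = ((4:ℝ)^q)⁻¹ := by
        rw [one_div, Real.inv_rpow (by norm_num : (0:ℝ) ≤ 4)]
      rw [div_pow, h14]
      calc C⁻¹ * r ^ n ≤ cR / ((4:ℝ)^n * (4:ℝ)^q) * r ^ n := by
            apply mul_le_mul_of_nonneg_right hCinv (by positivity)
        _ = ((4:ℝ)^q)⁻¹ * (r ^ n / 4 ^ n * cR) := by field_simp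
    · -- upper bound
      have hb : ∀ y ∈ ball x r ∩ Kᶜ, min 1 (Metric.infDist y K) ≤ 1 :=
        fun y _ => min_le_left _ _
      refine le_trans (hupper 1 zero_le_one hb) ?_
      apply ENNReal.ofReal_le_ofReal
      rw [Real.one_rpow, one_mul]
      have : 0 ≤ r ^ n := by positivity
      calc r ^ n * cR = cR * r ^ n := by ring
        _ ≤ C * r ^ n := mul_le_mul_of_nonneg_right hCc this
  · -- case 2 : r ≤ 1 and ρ ≤ 1
    rintro ⟨hr1, hρ1⟩
    have hrρ : 0 < r + ρ := by linarith
    constructor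
    · -- lower bound
      have hb : ∀ y ∈ ball z (r/4), (r + ρ)/4 ≤ min 1 (Metric.infDist y K) := by
        intro y hy
        have h1 := hzdist y hy
        apply le_min (by linarith)
        linarith
      refine le_trans ?_ (hlower ((r+ρ)/4) (by linarith) hb)
      apply ENNReal.ofReal_le_ofReal
      rw [Real.div_rpow (by linarith) (by norm_num), div_pow]
      calc C⁻¹ * (r ^ n * (r + ρ) ^ q)
          ≤ cR / ((4:ℝ)^n * (4:ℝ)^q) * (r ^ n * (r + ρ) ^ q) := by
            apply mul_le_mul_of_nonneg_right hCinv
            have : 0 ≤ (r+ρ)^q := (Real.rpow_pos_of_pos hrρ q).le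
            positivity
        _ = (r + ρ) ^ q / 4 ^ q * (r ^ n / 4 ^ n * cR) := by field_simp
    · -- upper bound
      have hb : ∀ y ∈ ball x r ∩ Kᶜ, min 1 (Metric.infDist y K) ≤ r + ρ := by
        intro y hy
        have hdy : dist y x < r := mem_ball.1 hy.1
        have hl : Metric.infDist y K ≤ Metric.infDist x K + dist y x :=
          Metric.infDist_le_infDist_add_dist
        have : Metric.infDist y K ≤ r + ρ := by rw [← hρ] at hl; linarith
        exact le_trans (min_le_right _ _) this
      refine le_trans (hupper (r + ρ) hrρ.le hb) ?_
      apply ENNReal.ofReal_le_ofReal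
      have hP : 0 ≤ (r + ρ) ^ q := (Real.rpow_pos_of_pos hrρ q).le
      have hrn : 0 ≤ r ^ n * (r + ρ) ^ q := by positivity
      calc (r + ρ) ^ q * (r ^ n * cR) = cR * (r ^ n * (r + ρ) ^ q) := by ring
        _ ≤ C * (r ^ n * (r + ρ) ^ q) := mul_le_mul_of_nonneg_right hCc hrn
end

section
/- For every β > 0 the measure σ_β on ℝⁿ with density |x|^β satisfies σ_β(B(x,r)) ≍ r^n (|x| + r)^β, and consequently for every p > 1 the weight |x|^{-τ} belongs to A_p of the measure |x|^{2τ} dx. -/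
/-!
On `ball x r` the norm is at most `‖x‖ + r`, while on the ball of radius `r / 4` centred at
distance `r / 2` from `x`, pushed away from the origin, it is at least `(‖x‖ + r) / 4`. As Haar
measure scales like `r ^ d`, this gives `∫_{B(x,r)} ‖y‖ ^ β ≍ (‖x‖ + r) ^ β μ(B(x,r))`.
Against `dν = ‖y‖ ^ (2τ) dy`, both integrals in the `A_p` condition for `‖y‖ ^ (-τ)` are
integrals of powers of the norm (with exponents `τ` and `2τ + τ / (p - 1)`), so each average is
comparable to a power of `‖x‖ + r`, and these powers cancel in the `A_p` product.
-/

open MeasureTheory Metric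
open scoped ENNReal

lemma exists_norm_eq_norm_add_and_dist_eq {E : Type*} [NormedAddCommGroup E] [NormedSpace ℝ E]
    [Nontrivial E] (x : E) {t : ℝ} (ht : 0 ≤ t) :
    ∃ z : E, ‖z‖ = ‖x‖ + t ∧ dist z x = t := by
  obtain ⟨u, hu, hxu⟩ : ∃ u : E, ‖u‖ = 1 ∧ x = ‖x‖ • u := by
    rcases eq_or_ne x 0 with rfl | hx
    · obtain ⟨u, hu⟩ := exists_norm_eq E zero_le_one
      exact ⟨u, hu, by simp⟩
    · exact ⟨‖x‖⁻¹ • x, by simp [norm_smul, hx], by simp [smul_smul, hx]⟩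
  refine ⟨(‖x‖ + t) • u, ?_, ?_⟩
  · rw [norm_smul, hu, mul_one, Real.norm_of_nonneg (by positivity)]
  · rw [dist_eq_norm]
    nth_rewrite 2 [hxu]
    rw [← sub_smul, add_sub_cancel_left, norm_smul, hu, mul_one, Real.norm_of_nonneg ht]

lemma setLIntegral_withDensity_norm_rpow {E : Type*} [NormedAddCommGroup E] [MeasurableSpace E]
    [BorelSpace E] (μ : Measure E) [NullSingletonClass μ] {f : E → ℝ≥0∞} {a : ℝ}
    (hf : ∀ y ≠ 0, f y = ENNReal.ofReal (‖y‖ ^ a)) (b : ℝ) {s : Set E} (hs : MeasurableSet s) :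
    ∫⁻ y in s, f y ∂μ.withDensity (fun y => ENNReal.ofReal (‖y‖ ^ b)) =
      ∫⁻ y in s, ENNReal.ofReal (‖y‖ ^ (a + b)) ∂μ := by
  have hdens : Measurable fun y : E => ENNReal.ofReal (‖y‖ ^ b) := by fun_prop
  rw [restrict_withDensity hs, lintegral_withDensity_eq_lintegral_mul_non_measurable _ hdens
    (.of_forall fun _ => ENNReal.ofReal_lt_top)]
  refine lintegral_congr_ae (ae_restrict_of_ae ?_)
  filter_upwards [compl_mem_ae_iff.2 (measure_singleton (0 : E))] with y hy
  rw [Pi.mul_apply, hf y hy, ← ENNReal.ofReal_mul (by positivity),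
    ← Real.rpow_add (norm_pos_iff.2 hy), add_comm]

section NormRpowOnBalls

variable {E : Type*} [NormedAddCommGroup E] [MeasurableSpace E] [BorelSpace E] (μ : Measure E)

lemma setLIntegral_ball_norm_rpow_le {β : ℝ} (hβ : 0 ≤ β) (x : E) (r : ℝ) :
    ∫⁻ y in ball x r, ENNReal.ofReal (‖y‖ ^ β) ∂μ ≤
      ENNReal.ofReal ((‖x‖ + r) ^ β) * μ (ball x r) := by
  rw [← setLIntegral_const]
  refine setLIntegral_mono' measurableSet_ball fun y hy => ENNReal.ofReal_le_ofReal ?_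
  refine Real.rpow_le_rpow (norm_nonneg y) ?_ hβ
  linarith [norm_sub_norm_le y x, mem_ball_iff_norm.1 hy]

variable [NormedSpace ℝ E] [Nontrivial E] [FiniteDimensional ℝ E] [μ.IsAddHaarMeasure]

lemma le_setLIntegral_ball_norm_rpow {β : ℝ} (hβ : 0 ≤ β) (x : E) {r : ℝ} (hr : 0 ≤ r) :
    ENNReal.ofReal ((4 : ℝ) ^ (-(β + Module.finrank ℝ E)) * (‖x‖ + r) ^ β) * μ (ball x r) ≤
      ∫⁻ y in ball x r, ENNReal.ofReal (‖y‖ ^ β) ∂μ := by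
  obtain ⟨z, hz, hzx⟩ := exists_norm_eq_norm_add_and_dist_eq x (by positivity : 0 ≤ r / 2)
  have hsub : ball z (r / 4) ⊆ ball x r := fun y hy => by
    rw [mem_ball] at hy ⊢
    linarith [dist_triangle y z x]
  have hnorm : ∀ y ∈ ball z (r / 4), (‖x‖ + r) / 4 ≤ ‖y‖ := fun y hy => by
    linarith [norm_sub_norm_le z y, mem_ball_iff_norm'.1 hy, norm_nonneg x]
  have hvol :
      μ (ball z (r / 4)) = ENNReal.ofReal ((4 : ℝ)⁻¹ ^ Module.finrank ℝ E) * μ (ball x r) := by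
    rw [div_eq_inv_mul, Measure.addHaar_ball_mul μ z (by norm_num),
      Measure.addHaar_ball_center μ x]
  calc ENNReal.ofReal ((4 : ℝ) ^ (-(β + Module.finrank ℝ E)) * (‖x‖ + r) ^ β) * μ (ball x r)
      = ENNReal.ofReal (((‖x‖ + r) / 4) ^ β) * μ (ball z (r / 4)) := by
        rw [hvol, ← mul_assoc, ← ENNReal.ofReal_mul (by positivity), Real.rpow_neg (by norm_num),
          Real.rpow_add (by norm_num), Real.rpow_natCast,
          Real.div_rpow (by positivity) (by norm_num)]
        congr 2
        rw [inv_pow]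
        field_simp
    _ = ∫⁻ _ in ball z (r / 4), ENNReal.ofReal (((‖x‖ + r) / 4) ^ β) ∂μ :=
        (setLIntegral_const _ _).symm
    _ ≤ ∫⁻ y in ball z (r / 4), ENNReal.ofReal (‖y‖ ^ β) ∂μ :=
        setLIntegral_mono' measurableSet_ball fun y hy =>
          ENNReal.ofReal_le_ofReal (Real.rpow_le_rpow (by positivity) (hnorm y hy) hβ)
    _ ≤ ∫⁻ y in ball x r, ENNReal.ofReal (‖y‖ ^ β) ∂μ := lintegral_mono_set hsub

lemma setLIntegral_ball_norm_rpow_ratio_le {a b : ℝ} (ha : 0 ≤ a) (hb : 0 ≤ b) (x : E) {r : ℝ}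
    (hr : 0 < r) :
    (∫⁻ y in ball x r, ENNReal.ofReal (‖y‖ ^ b) ∂μ)⁻¹ *
        ∫⁻ y in ball x r, ENNReal.ofReal (‖y‖ ^ a) ∂μ ≤
      ENNReal.ofReal ((4 : ℝ) ^ (b + Module.finrank ℝ E) * (‖x‖ + r) ^ (a - b)) := by
  have hS : 0 < ‖x‖ + r := by positivity
  have hB0 : μ (ball x r) ≠ 0 := (measure_ball_pos μ x hr).ne'
  have hBtop : μ (ball x r) ≠ ∞ := measure_ball_lt_top.ne
  set c := (4 : ℝ) ^ (-(b + Module.finrank ℝ E)) * (‖x‖ + r) ^ b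
  have hc : 0 < c := by positivity
  calc (∫⁻ y in ball x r, ENNReal.ofReal (‖y‖ ^ b) ∂μ)⁻¹ *
        ∫⁻ y in ball x r, ENNReal.ofReal (‖y‖ ^ a) ∂μ
      ≤ (ENNReal.ofReal c * μ (ball x r))⁻¹ * (ENNReal.ofReal ((‖x‖ + r) ^ a) * μ (ball x r)) :=
        mul_le_mul' (ENNReal.inv_le_inv.2 (le_setLIntegral_ball_norm_rpow μ hb x hr.le))
          (setLIntegral_ball_norm_rpow_le μ ha x r)
    _ = (ENNReal.ofReal c)⁻¹ * ENNReal.ofReal ((‖x‖ + r) ^ a) *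
          ((μ (ball x r))⁻¹ * μ (ball x r)) := by
        rw [ENNReal.mul_inv (Or.inr hBtop) (Or.inr hB0)]
        ring
    _ = ENNReal.ofReal ((4 : ℝ) ^ (b + Module.finrank ℝ E) * (‖x‖ + r) ^ (a - b)) := by
        rw [ENNReal.inv_mul_cancel hB0 hBtop, mul_one, ← ENNReal.ofReal_inv_of_pos hc,
          ← ENNReal.ofReal_mul (by positivity)]
        congr 1
        simp only [c]
        rw [Real.rpow_sub hS, Real.rpow_neg (by norm_num)]
        field_simp

lemma exists_setLIntegral_ball_norm_rpow_comparable {β : ℝ} (hβ : 0 ≤ β) :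
    ∃ C : ℝ, 0 < C ∧ ∀ (x : E) (r : ℝ), 0 < r →
      ENNReal.ofReal (C⁻¹ * (r ^ Module.finrank ℝ E * (‖x‖ + r) ^ β)) ≤
          ∫⁻ y in ball x r, ENNReal.ofReal (‖y‖ ^ β) ∂μ ∧
        ∫⁻ y in ball x r, ENNReal.ofReal (‖y‖ ^ β) ∂μ ≤
          ENNReal.ofReal (C * (r ^ Module.finrank ℝ E * (‖x‖ + r) ^ β)) := by
  set d := Module.finrank ℝ E
  set v := (μ (ball (0 : E) 1)).toReal
  have hv : 0 < v := ENNReal.toReal_pos (measure_ball_pos μ 0 one_pos).ne' measure_ball_lt_top.ne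
  have hvol (x : E) {r : ℝ} (hr : 0 < r) : μ (ball x r) = ENNReal.ofReal (r ^ d * v) := by
    rw [Measure.addHaar_ball_of_pos μ x hr, ENNReal.ofReal_mul (by positivity),
      ENNReal.ofReal_toReal measure_ball_lt_top.ne]
  have hK : 1 ≤ (4 : ℝ) ^ (β + d) := Real.one_le_rpow (by norm_num) (by positivity)
  refine ⟨4 ^ (β + d) * (v + v⁻¹), by positivity, fun x r hr => ⟨?_, ?_⟩⟩
  · refine le_trans ?_ (le_setLIntegral_ball_norm_rpow μ hβ x hr.le)
    rw [hvol x hr, ← ENNReal.ofReal_mul (by positivity)]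
    refine ENNReal.ofReal_le_ofReal ?_
    have hC : (4 ^ (β + d) * (v + v⁻¹))⁻¹ ≤ (4 : ℝ) ^ (-(β + d)) * v :=
      calc (4 ^ (β + d) * (v + v⁻¹))⁻¹ ≤ (4 ^ (β + d) * v⁻¹)⁻¹ :=
            inv_anti₀ (by positivity) (by gcongr; linarith)
        _ = _ := by rw [mul_inv, inv_inv, Real.rpow_neg (by norm_num)]
    calc (4 ^ (β + d) * (v + v⁻¹))⁻¹ * (r ^ d * (‖x‖ + r) ^ β)
        ≤ (4 : ℝ) ^ (-(β + d)) * v * (r ^ d * (‖x‖ + r) ^ β) := by gcongr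
      _ = _ := by ring
  · refine (setLIntegral_ball_norm_rpow_le μ hβ x r).trans ?_
    rw [hvol x hr, ← ENNReal.ofReal_mul (by positivity)]
    refine ENNReal.ofReal_le_ofReal ?_
    have hC : v ≤ 4 ^ (β + d) * (v + v⁻¹) := by nlinarith [inv_pos.2 hv]
    calc (‖x‖ + r) ^ β * (r ^ d * v) = v * (r ^ d * (‖x‖ + r) ^ β) := by ring
      _ ≤ _ := by gcongr

/-- The product of averages whose supremum over balls is the `A_p` constant of `w` with respect
to `ν`. -/
noncomputable def apAverageProduct (ν : Measure E) (w : E → ℝ≥0∞) (p : ℝ) (s : Set E) : ℝ≥0∞ :=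
  ((ν s)⁻¹ * ∫⁻ y in s, w y ∂ν) * ((ν s)⁻¹ * ∫⁻ y in s, w y ^ (-(1 / (p - 1))) ∂ν) ^ (p - 1)

lemma apAverageProduct_norm_rpow_neg_ball_le {τ p : ℝ} (hτ : 0 < τ) (hp : 1 < p) (x : E) {r : ℝ}
    (hr : 0 < r) :
    apAverageProduct (μ.withDensity fun y => ENNReal.ofReal (‖y‖ ^ (2 * τ)))
        (fun y => ENNReal.ofReal (‖y‖ ^ (-τ))) p (ball x r) ≤
      ENNReal.ofReal (((4 : ℝ) ^ (2 * τ + Module.finrank ℝ E)) ^ p) := by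
  have hp₁ : 0 < p - 1 := by linarith
  have hS : 0 < ‖x‖ + r := by positivity
  set K : ℝ := (4 : ℝ) ^ (2 * τ + Module.finrank ℝ E)
  have hK : 0 < K := by positivity
  have hball : μ.withDensity (fun y => ENNReal.ofReal (‖y‖ ^ (2 * τ))) (ball x r) =
      ∫⁻ y in ball x r, ENNReal.ofReal (‖y‖ ^ (2 * τ)) ∂μ :=
    withDensity_apply _ measurableSet_ball
  have hweight : ∫⁻ y in ball x r, ENNReal.ofReal (‖y‖ ^ (-τ))
        ∂μ.withDensity (fun y => ENNReal.ofReal (‖y‖ ^ (2 * τ))) =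
      ∫⁻ y in ball x r, ENNReal.ofReal (‖y‖ ^ (-τ + 2 * τ)) ∂μ :=
    setLIntegral_withDensity_norm_rpow μ (fun _ _ => rfl) _ measurableSet_ball
  have hdual : ∫⁻ y in ball x r, ENNReal.ofReal (‖y‖ ^ (-τ)) ^ (-(1 / (p - 1)))
        ∂μ.withDensity (fun y => ENNReal.ofReal (‖y‖ ^ (2 * τ))) =
      ∫⁻ y in ball x r, ENNReal.ofReal (‖y‖ ^ (τ / (p - 1) + 2 * τ)) ∂μ := by
    refine setLIntegral_withDensity_norm_rpow μ (fun y hy => ?_) _ measurableSet_ball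
    rw [ENNReal.ofReal_rpow_of_pos (by positivity), ← Real.rpow_mul (norm_nonneg y)]
    ring_nf
  have h₁ := setLIntegral_ball_norm_rpow_ratio_le μ (a := -τ + 2 * τ) (b := 2 * τ)
    (by linarith) (by positivity) x hr
  have h₂ := setLIntegral_ball_norm_rpow_ratio_le μ (a := τ / (p - 1) + 2 * τ) (b := 2 * τ)
    (by positivity) (by positivity) x hr
  unfold apAverageProduct
  rw [hball, hweight, hdual]
  calc _ ≤ ENNReal.ofReal (K * (‖x‖ + r) ^ (-τ + 2 * τ - 2 * τ)) *
        ENNReal.ofReal (K * (‖x‖ + r) ^ (τ / (p - 1) + 2 * τ - 2 * τ)) ^ (p - 1) := by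
        gcongr
    _ = ENNReal.ofReal (K ^ p) := by
        rw [ENNReal.ofReal_rpow_of_nonneg (by positivity) hp₁.le,
          ← ENNReal.ofReal_mul (by positivity)]
        congr 1
        rw [Real.mul_rpow hK.le (by positivity), ← Real.rpow_mul hS.le,
          Real.rpow_sub_one hK.ne', show -τ + 2 * τ - 2 * τ = -τ by ring,
          show (τ / (p - 1) + 2 * τ - 2 * τ) * (p - 1) = τ by field_simp; ring,
          Real.rpow_neg hS.le]
        field_simp

end NormRpowOnBalls

/-- For every `β > 0` the measure `σ_β` on `ℝⁿ` with density `|x|^β` satisfies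
`σ_β(B(x,r)) ≍ rⁿ (|x|+r)^β`; consequently for every `p > 1` the weight `|x|^{−τ}`
belongs to `A_p` of the measure `dν = |x|^{2τ} dx`. -/
theorem stmt14 (n : ℕ) (hn : 1 ≤ n) (τ : ℝ) (hτ : 0 < τ)
    (ν : Measure (EuclideanSpace ℝ (Fin n)))
    (hν : ν = volume.withDensity fun y => ENNReal.ofReal (‖y‖ ^ (2 * τ))) :
    (∀ β : ℝ, 0 < β → ∃ C : ℝ, 0 < C ∧
      ∀ (x : EuclideanSpace ℝ (Fin n)) (r : ℝ), 0 < r →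
        ENNReal.ofReal (C⁻¹ * (r ^ n * (‖x‖ + r) ^ β)) ≤
          (∫⁻ y in Metric.ball x r, ENNReal.ofReal (‖y‖ ^ β)) ∧
        (∫⁻ y in Metric.ball x r, ENNReal.ofReal (‖y‖ ^ β)) ≤
          ENNReal.ofReal (C * (r ^ n * (‖x‖ + r) ^ β))) ∧
    (∀ p : ℝ, 1 < p → ∃ C : ℝ≥0∞, C ≠ ∞ ∧
      ∀ (x : EuclideanSpace ℝ (Fin n)) (r : ℝ), 0 < r →
        ((ν (Metric.ball x r))⁻¹ *
            ∫⁻ y in Metric.ball x r, ENNReal.ofReal (‖y‖ ^ (-τ)) ∂ν) *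
          ((ν (Metric.ball x r))⁻¹ *
            ∫⁻ y in Metric.ball x r,
              (ENNReal.ofReal (‖y‖ ^ (-τ))) ^ (-(1 / (p - 1))) ∂ν) ^ (p - 1) ≤ C) := by
  have : Nonempty (Fin n) := ⟨⟨0, hn⟩⟩
  have hdim : Module.finrank ℝ (EuclideanSpace ℝ (Fin n)) = n := finrank_euclideanSpace_fin
  refine ⟨fun β hβ => ?_, fun p hp => ?_⟩
  · simpa only [hdim] using exists_setLIntegral_ball_norm_rpow_comparable
      (E := EuclideanSpace ℝ (Fin n)) volume hβ.le
  · refine ⟨ENNReal.ofReal (((4 : ℝ) ^ (2 * τ + n)) ^ p), ENNReal.ofReal_ne_top,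
      fun x r hr => ?_⟩
    subst hν
    simpa only [hdim, apAverageProduct] using
      apAverageProduct_norm_rpow_neg_ball_le volume hτ hp x hr
end

section
/- Let T_t(x,y) = (4πt)^{-1/2}(exp(−(x−y)²/(4t)) − exp(−(x+y)²/(4t))) on (0,∞) and ν the measure on (0,∞) with density y². Then T_t(x,y)/(xy) ≍ ν(B(x,√t))^{-1} exp(−(x−y)²/(ct)) with two-sided bounds (with possibly different constants c in upper and lower bounds), where ν(B(x,r)) ≍ r(x+r)² for x, r > 0. -/
/-!
Writing `u = xy/t`, the kernel factors as `(4πt)^{-1/2} e^{-(x-y)²/(4t)} (1 - e^{-u})` and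
`1 - e^{-u} ≍ min(1, u)`, while `ν(B(x,r)) = ((x+r)³ - max(0,x-r)³)/3 ≍ r(x+r)²`.
So `T_t(x,y)/(xy)` compares with `t^{-1/2} (x+√t)^{-2}` up to polynomial factors that appear
only when `y` is far from `x` (`y > 2(x+√t)` or `x > 2y`); there `(x-y)² ≳ max(x,y)²`, and
trading part of the Gaussian exponent (`c₁ = 2`, `c₂ = 8`) absorbs those factors.
-/

open MeasureTheory Real

lemma integral_Ioo_sq {a b : ℝ} (hab : a ≤ b) : ∫ y in Set.Ioo a b, y ^ 2 = (b ^ 3 - a ^ 3) / 3 := by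
  rw [← integral_Ioc_eq_integral_Ioo, ← intervalIntegral.integral_of_le hab, integral_pow]
  norm_num

lemma integral_sq_ball_bounds {x r : ℝ} (hx : 0 < x) (hr : 0 < r) :
    3⁻¹ * (r * (x + r) ^ 2) ≤ ∫ y in Set.Ioo (max 0 (x - r)) (x + r), y ^ 2 ∧
      ∫ y in Set.Ioo (max 0 (x - r)) (x + r), y ^ 2 ≤ 3 * (r * (x + r) ^ 2) := by
  set m := max 0 (x - r)
  have hm₀ : 0 ≤ m := le_max_left _ _
  have hm : x - r ≤ m := le_max_right _ _
  have hmx : m ≤ x := max_le hx.le (by linarith)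
  rw [integral_Ioo_sq (by linarith)]
  have hcube : (x + r) ^ 3 - m ^ 3 = (x + r - m) * ((x + r) ^ 2 + (x + r) * m + m ^ 2) := by ring
  rw [hcube]
  constructor
  · have : (x + r) ^ 2 ≤ (x + r) ^ 2 + (x + r) * m + m ^ 2 := by nlinarith
    nlinarith
  · have : (x + r) ^ 2 + (x + r) * m + m ^ 2 ≤ 3 * (x + r) ^ 2 := by nlinarith
    nlinarith

lemma exp_neg_le_inv {a : ℝ} (ha : 0 < a) : exp (-a) ≤ a⁻¹ := by
  rw [exp_neg]
  exact inv_anti₀ ha (by linarith [add_one_le_exp a])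

lemma div_one_add_le_one_sub_exp_neg {u : ℝ} (hu : 0 ≤ u) : u / (1 + u) ≤ 1 - exp (-u) := by
  have : exp (-u) ≤ (1 + u)⁻¹ := by
    rw [exp_neg]; exact inv_anti₀ (by positivity) (by linarith [add_one_le_exp u])
  have h : u / (1 + u) = 1 - (1 + u)⁻¹ := by field_simp; ring
  linarith

lemma one_sub_exp_neg_le_min (u : ℝ) : 1 - exp (-u) ≤ min 1 u :=
  le_min (by linarith [exp_pos (-u)]) (by linarith [one_sub_le_exp_neg u])

lemma exp_neg_sub_sq_div_le {x y c : ℝ} (hx : 0 < x) (hxy : 2 * x ≤ y) (hc : 0 < c) :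
    exp (-(x - y) ^ 2 / c) ≤ 4 * c / y ^ 2 := by
  have hy : 0 < y := by linarith
  calc exp (-(x - y) ^ 2 / c) ≤ exp (-(y ^ 2 / (4 * c))) := by
        have hsq : y ^ 2 ≤ 4 * (x - y) ^ 2 := by nlinarith
        rw [exp_le_exp, neg_div, neg_le_neg_iff, div_le_div_iff₀ (by positivity) hc]
        nlinarith
    _ ≤ 4 * c / y ^ 2 := by
        simpa only [inv_div] using exp_neg_le_inv (show 0 < y ^ 2 / (4 * c) by positivity)

lemma add_mul_exp_neg_sub_sq_le {x y s : ℝ} (hx : 0 < x) (hy : 0 < y) (hs : 0 < s) :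
    (s ^ 2 + x * y) * exp (-(x - y) ^ 2 / (4 * s ^ 2)) ≤ 16 * (x + s) ^ 2 := by
  rcases le_or_gt y (2 * (x + s)) with hnear | hfar
  · have hexp : exp (-(x - y) ^ 2 / (4 * s ^ 2)) ≤ 1 :=
      exp_le_one_iff.2 (div_nonpos_of_nonpos_of_nonneg (by nlinarith) (by positivity))
    calc (s ^ 2 + x * y) * exp (-(x - y) ^ 2 / (4 * s ^ 2)) ≤ s ^ 2 + x * y := by
          nlinarith [mul_pos hx hy]
      _ ≤ 16 * (x + s) ^ 2 := by nlinarith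
  · have hexp : exp (-(x - y) ^ 2 / (4 * s ^ 2)) ≤ 4 * (4 * s ^ 2) / y ^ 2 :=
      exp_neg_sub_sq_div_le hx (by linarith) (by positivity)
    calc (s ^ 2 + x * y) * exp (-(x - y) ^ 2 / (4 * s ^ 2))
        ≤ (s ^ 2 + x * y) * (4 * (4 * s ^ 2) / y ^ 2) := by gcongr
      _ ≤ 16 * (x + s) ^ 2 := by
        rw [mul_div_assoc', div_le_iff₀ (by positivity)]
        have hsy : s ≤ y := by linarith
        have h₁ : s ^ 2 * s ^ 2 ≤ s ^ 2 * y ^ 2 := by gcongr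
        have h₂ : x * y * s * s ≤ x * y * s * (2 * y) := by gcongr; linarith
        nlinarith [mul_pos (mul_pos hx hs) (mul_pos hy hy)]

lemma exp_neg_sub_sq_mul_min_le {x y s : ℝ} (hx : 0 < x) (hy : 0 < y) (hs : 0 < s) :
    exp (-(x - y) ^ 2 / (8 * s ^ 2)) * min 1 (x * y / s ^ 2) * (x + s) ^ 2 ≤ 66 * (x * y) := by
  set E := exp (-(x - y) ^ 2 / (8 * s ^ 2))
  set M := min 1 (x * y / s ^ 2)
  have hE₀ : 0 ≤ E := (exp_pos _).le
  have hE₁ : E ≤ 1 := exp_le_one_iff.2 (div_nonpos_of_nonpos_of_nonneg (by nlinarith) (by positivity))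
  have hM₀ : 0 ≤ M := le_min zero_le_one (by positivity)
  have hM₁ : M ≤ 1 := min_le_left _ _
  have hM : M ≤ x * y / s ^ 2 := min_le_right _ _
  have hs_part : E * M * (2 * s ^ 2) ≤ 2 * (x * y) :=
    calc E * M * (2 * s ^ 2) ≤ 1 * (x * y / s ^ 2) * (2 * s ^ 2) := by gcongr
      _ = 2 * (x * y) := by field_simp
  have hx_part : E * M * (2 * x ^ 2) ≤ 64 * (x * y) := by
    rcases le_or_gt x (2 * y) with hnear | hfar
    · calc E * M * (2 * x ^ 2) ≤ 1 * 1 * (2 * x ^ 2) := by gcongr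
        _ ≤ 64 * (x * y) := by nlinarith
    · have hE : E ≤ 4 * (8 * s ^ 2) / x ^ 2 := by
        simpa only [E, sub_sq_comm x y] using
          exp_neg_sub_sq_div_le hy hfar.le (show 0 < 8 * s ^ 2 by positivity)
      calc E * M * (2 * x ^ 2) ≤ 4 * (8 * s ^ 2) / x ^ 2 * (x * y / s ^ 2) * (2 * x ^ 2) := by
            gcongr
        _ = 64 * (x * y) := by field_simp; ring
  calc E * M * (x + s) ^ 2 ≤ E * M * (2 * x ^ 2) + E * M * (2 * s ^ 2) := by
        rw [← mul_add]; gcongr; nlinarith [sq_nonneg (x - s)]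
    _ ≤ 66 * (x * y) := by linarith

lemma rpow_neg_half_four_pi_mul_sq_bounds {s : ℝ} (hs : 0 < s) :
    (4 * s)⁻¹ ≤ (4 * π * s ^ 2) ^ (-(1 : ℝ) / 2) ∧ (4 * π * s ^ 2) ^ (-(1 : ℝ) / 2) ≤ (3 * s)⁻¹ := by
  have hA : (4 * π * s ^ 2) ^ (-(1 : ℝ) / 2) = (√(4 * π * s ^ 2))⁻¹ := by
    rw [neg_div, rpow_neg (by positivity), sqrt_eq_rpow]
  rw [hA]
  constructor
  · refine inv_anti₀ (by positivity) (sqrt_le_iff.2 ⟨by positivity, ?_⟩)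
    nlinarith [pi_le_four, sq_nonneg s]
  · refine inv_anti₀ (by positivity) ((le_sqrt (by positivity) (by positivity)).2 ?_)
    nlinarith [pi_gt_three, sq_nonneg s]

lemma exp_sub_exp_eq_mul_one_sub_exp (x y : ℝ) {t : ℝ} (ht : t ≠ 0) :
    exp (-(x - y) ^ 2 / (4 * t)) - exp (-(x + y) ^ 2 / (4 * t)) =
      exp (-(x - y) ^ 2 / (4 * t)) * (1 - exp (-(x * y / t))) := by
  rw [mul_sub, mul_one, ← exp_add]
  congr 2
  field_simp
  ring

noncomputable def dirichletHeatKernel (t x y : ℝ) : ℝ :=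
  (4 * π * t) ^ (-(1 : ℝ) / 2) * (exp (-(x - y) ^ 2 / (4 * t)) - exp (-(x + y) ^ 2 / (4 * t)))

lemma exp_div_le_dirichletHeatKernel_div {x y s : ℝ} (hx : 0 < x) (hy : 0 < y) (hs : 0 < s) :
    exp (-(x - y) ^ 2 / (2 * s ^ 2)) / (64 * (s * (x + s) ^ 2)) ≤
      dirichletHeatKernel (s ^ 2) x y / (x * y) := by
  rw [dirichletHeatKernel, exp_sub_exp_eq_mul_one_sub_exp x y (by positivity)]
  set e := exp (-(x - y) ^ 2 / (4 * s ^ 2))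
  set u := x * y / s ^ 2
  have he : exp (-(x - y) ^ 2 / (2 * s ^ 2)) = e * e := by
    rw [← exp_add]; congr 1; field_simp; ring
  have hkey := add_mul_exp_neg_sub_sq_le hx hy hs
  calc exp (-(x - y) ^ 2 / (2 * s ^ 2)) / (64 * (s * (x + s) ^ 2))
      = (4 * s)⁻¹ * (e * (e / (16 * (x + s) ^ 2))) := by rw [he]; field_simp; ring
    _ ≤ (4 * s)⁻¹ * (e * (s ^ 2 + x * y)⁻¹) := by
      gcongr
      rw [div_le_iff₀ (by positivity), inv_mul_eq_div, le_div_iff₀ (by positivity)]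
      linarith
    _ = (4 * s)⁻¹ * (e * (u / (1 + u))) / (x * y) := by
      simp only [u]; field_simp
    _ ≤ (4 * π * s ^ 2) ^ (-(1 : ℝ) / 2) * (e * (1 - exp (-u))) / (x * y) := by
      gcongr
      · exact (rpow_neg_half_four_pi_mul_sq_bounds hs).1
      · exact div_one_add_le_one_sub_exp_neg (by positivity)

lemma dirichletHeatKernel_div_le {x y s : ℝ} (hx : 0 < x) (hy : 0 < y) (hs : 0 < s) :
    dirichletHeatKernel (s ^ 2) x y / (x * y) ≤
      22 * exp (-(x - y) ^ 2 / (8 * s ^ 2)) / (s * (x + s) ^ 2) := by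
  rw [dirichletHeatKernel, exp_sub_exp_eq_mul_one_sub_exp x y (by positivity)]
  set e := exp (-(x - y) ^ 2 / (8 * s ^ 2))
  set u := x * y / s ^ 2
  have he : exp (-(x - y) ^ 2 / (4 * s ^ 2)) = e * e := by
    rw [← exp_add]; congr 1; field_simp; ring
  have hkey := exp_neg_sub_sq_mul_min_le hx hy hs
  have hG : 0 ≤ 1 - exp (-u) := sub_nonneg.2 (exp_le_one_iff.2 (neg_nonpos.2 (by positivity)))
  rw [he]
  calc (4 * π * s ^ 2) ^ (-(1 : ℝ) / 2) * (e * e * (1 - exp (-u))) / (x * y)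
        ≤ (3 * s)⁻¹ * (e * (e * min 1 u)) / (x * y) := by
        rw [mul_assoc e]
        gcongr
        · exact (rpow_neg_half_four_pi_mul_sq_bounds hs).2
        · exact one_sub_exp_neg_le_min u
    _ ≤ (3 * s)⁻¹ * (e * (66 * (x * y) / (x + s) ^ 2)) / (x * y) := by
      gcongr
      rw [le_div_iff₀ (by positivity)]
      exact hkey
    _ = 22 * e / (s * (x + s) ^ 2) := by field_simp; ring

/-- For the Dirichlet heat kernel `T_t` on `(0,∞)` and the measure `ν` with density `y²`,
one has `ν(B(x,r)) ≍ r (x+r)²` and the two-sided bound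
`T_t(x,y)/(xy) ≍ ν(B(x,√t))⁻¹ exp(−(x−y)²/(ct))`. -/
theorem stmt16 (T : ℝ → ℝ → ℝ → ℝ)
    (hT : ∀ t x y, T t x y =
      (4 * π * t) ^ (-(1 : ℝ) / 2) *
        (Real.exp (-(x - y) ^ 2 / (4 * t)) - Real.exp (-(x + y) ^ 2 / (4 * t))))
    (ν : ℝ → ℝ → ℝ)
    (hν : ∀ x r, ν x r = ∫ y in Set.Ioo (max 0 (x - r)) (x + r), y ^ 2) :
    (∃ C : ℝ, 0 < C ∧ ∀ x r : ℝ, 0 < x → 0 < r →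
      C⁻¹ * (r * (x + r) ^ 2) ≤ ν x r ∧ ν x r ≤ C * (r * (x + r) ^ 2)) ∧
    (∃ C c₁ c₂ : ℝ, 0 < C ∧ 0 < c₁ ∧ 0 < c₂ ∧ ∀ x y t : ℝ, 0 < x → 0 < y → 0 < t →
      C⁻¹ * (ν x (Real.sqrt t))⁻¹ * Real.exp (-(x - y) ^ 2 / (c₁ * t)) ≤
        T t x y / (x * y) ∧
      T t x y / (x * y) ≤
        C * (ν x (Real.sqrt t))⁻¹ * Real.exp (-(x - y) ^ 2 / (c₂ * t))) := by
  obtain rfl : T = dirichletHeatKernel := by funext t x y; exact hT t x y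
  refine ⟨⟨3, by norm_num, fun x r hx hr => hν x r ▸ integral_sq_ball_bounds hx hr⟩,
    192, 2, 8, by norm_num, by norm_num, by norm_num, fun x y t hx hy ht => ?_⟩
  obtain ⟨s, hs, rfl⟩ : ∃ s, 0 < s ∧ t = s ^ 2 := ⟨√t, sqrt_pos.2 ht, (sq_sqrt ht.le).symm⟩
  rw [sqrt_sq hs.le]
  obtain ⟨hν₁, hν₂⟩ := hν x s ▸ integral_sq_ball_bounds hx hs
  have hνpos : 0 < ν x s := lt_of_lt_of_le (by positivity) hν₁
  constructor
  · calc 192⁻¹ * (ν x s)⁻¹ * exp (-(x - y) ^ 2 / (2 * s ^ 2))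
        ≤ 192⁻¹ * (3⁻¹ * (s * (x + s) ^ 2))⁻¹ * exp (-(x - y) ^ 2 / (2 * s ^ 2)) := by
          gcongr
      _ = exp (-(x - y) ^ 2 / (2 * s ^ 2)) / (64 * (s * (x + s) ^ 2)) := by
          field_simp; ring
      _ ≤ _ := exp_div_le_dirichletHeatKernel_div hx hy hs
  · calc dirichletHeatKernel (s ^ 2) x y / (x * y)
        ≤ 22 * exp (-(x - y) ^ 2 / (8 * s ^ 2)) / (s * (x + s) ^ 2) :=
          dirichletHeatKernel_div_le hx hy hs
      _ = 66 * (3 * (s * (x + s) ^ 2))⁻¹ * exp (-(x - y) ^ 2 / (8 * s ^ 2)) := by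
          field_simp; ring
      _ ≤ 192 * (ν x s)⁻¹ * exp (-(x - y) ^ 2 / (8 * s ^ 2)) := by
          gcongr
          norm_num
end

section
/- Let a(x) = 2^{-m} χ_{(2^m, 2^{m+1})}(x) on (0,∞) with m ∈ ℤ. Then a = Σ_{k≥0} 2^{-k} b_k where each b_k is C times a β-atom: b_k is supported in (2^{m+k}, 2^{m+k+2}), satisfies ∫ b_k(x) x dx = 0, and ‖b_k‖_{L^2(dx/x)} ≤ C (∫_{supp b_k} x dx)^{-1/2}; moreover Σ_k 2^{-k} ≤ C. -/
open MeasureTheory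

private lemma aux_int_id (a b : ℝ) (h : a ≤ b) :
    ∫ x in Set.Ioo a b, x = (b ^ 2 - a ^ 2) / 2 := by
  rw [← MeasureTheory.integral_Ioc_eq_integral_Ioo, ← intervalIntegral.integral_of_le h,
    integral_id]

private lemma aux_int_inv (a b : ℝ) (h0 : 0 < a) (h : a ≤ b) :
    ∫ x in Set.Ioo a b, 1 / x = Real.log (b / a) := by
  rw [← MeasureTheory.integral_Ioc_eq_integral_Ioo, ← intervalIntegral.integral_of_le h,
    integral_one_div]
  intro hc
  rw [Set.mem_uIcc] at hc
  rcases hc with ⟨h1, _⟩ | ⟨_, h2⟩ <;> linarith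

private lemma aux_ind_int (s : Set ℝ) (a b : ℝ) (hsub : Set.Ioo a b ⊆ s) (f : ℝ → ℝ) :
    ∫ x in s, (Set.Ioo a b).indicator f x = ∫ x in Set.Ioo a b, f x := by
  rw [setIntegral_indicator measurableSet_Ioo, Set.inter_eq_self_of_subset_right hsub]

private lemma aux_integ_id (s : Set ℝ) (a b : ℝ) :
    Integrable ((Set.Ioo a b).indicator id) (volume.restrict s) :=
  ((integrable_indicator_iff measurableSet_Ioo).2
    ((intervalIntegral.intervalIntegrable_id (μ := volume) (a := a) (b := b)).1.mono_set
      Set.Ioo_subset_Ioc_self)).restrict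

private lemma aux_integ_inv (s : Set ℝ) (a b : ℝ) (h0 : 0 < a) (h : a ≤ b) :
    Integrable ((Set.Ioo a b).indicator (fun y => 1 / y)) (volume.restrict s) := by
  refine ((integrable_indicator_iff measurableSet_Ioo).2 ?_).restrict
  have := (intervalIntegral.intervalIntegrable_one_div
    (by intro x hx; rw [Set.uIcc_of_le h] at hx; exact ne_of_gt (lt_of_lt_of_le h0 hx.1))
    (by fun_prop) : IntervalIntegrable (fun y : ℝ => 1 / y) volume a b)
  exact this.1.mono_set Set.Ioo_subset_Ioc_self

/-- Decomposition of the local atom `a = 2^{-m} χ_{(2^m,2^{m+1})}` into a series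
`a = Σ_{k≥0} 2^{-k} b_k` of (`C` times) β-atoms `b_k` supported in
`(2^{m+k}, 2^{m+k+2})`, with `∫ b_k(x) x dx = 0` and
`‖b_k‖²_{L²(dx/x)} ≤ C² (∫ x dx)⁻¹`, and `Σ_k 2^{-k} ≤ C`. -/
theorem stmt17 (m : ℤ) (a : ℝ → ℝ)
    (ha : ∀ x, a x = (2 : ℝ) ^ (-m) *
      Set.indicator (Set.Ioo ((2 : ℝ) ^ m) ((2 : ℝ) ^ (m + 1))) 1 x)
    (τ : ℕ → ℝ) (hτ : ∀ k, τ k = (2 : ℝ) ^ (-m) * 4 ^ (-(k : ℤ)))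
    (b : ℕ → ℝ → ℝ)
    (hb : ∀ k x, b k x = (2 : ℝ) ^ (k : ℤ) *
      (τ k * Set.indicator (Set.Ioo ((2 : ℝ) ^ (m + k)) ((2 : ℝ) ^ (m + k + 1))) 1 x -
       τ (k + 1) *
         Set.indicator (Set.Ioo ((2 : ℝ) ^ (m + k + 1)) ((2 : ℝ) ^ (m + k + 2))) 1 x)) :
    ∃ C : ℝ, 0 < C ∧
      (∀ x, a x = ∑' k : ℕ, (2 : ℝ) ^ (-(k : ℤ)) * b k x) ∧
      (∀ (k : ℕ) (x : ℝ), x ∉ Set.Ioo ((2 : ℝ) ^ (m + k)) ((2 : ℝ) ^ (m + k + 2)) →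
        b k x = 0) ∧
      (∀ k : ℕ,
        ∫ x in Set.Ioo ((2 : ℝ) ^ (m + k)) ((2 : ℝ) ^ (m + k + 2)), b k x * x = 0) ∧
      (∀ k : ℕ,
        (∫ x in Set.Ioo ((2 : ℝ) ^ (m + k)) ((2 : ℝ) ^ (m + k + 2)), (b k x) ^ 2 / x) ≤
          C ^ 2 * (∫ x in Set.Ioo ((2 : ℝ) ^ (m + k)) ((2 : ℝ) ^ (m + k + 2)), x)⁻¹) ∧
      (∑' k : ℕ, (2 : ℝ) ^ (-(k : ℤ))) ≤ C := by
  have h2 : (0 : ℝ) < 2 := by norm_num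
  have hP : ∀ p : ℤ, (0 : ℝ) < 2 ^ p := fun p => zpow_pos h2 p
  have hmono : ∀ p q : ℤ, p ≤ q → (2 : ℝ) ^ p ≤ 2 ^ q := fun p q h =>
    zpow_le_zpow_right₀ (by norm_num) h
  have hstep : ∀ p : ℤ, (2 : ℝ) ^ (p + 1) = 2 * 2 ^ p := by
    intro p; rw [zpow_add₀ (by norm_num : (2:ℝ) ≠ 0), zpow_one]; ring
  -- key constants
  have hc1 : ∀ k : ℕ, (2 : ℝ) ^ (k : ℤ) * τ k = ((2 : ℝ) ^ (m + k))⁻¹ := by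
    intro k
    have h4 : (4 : ℝ) ^ (-(k : ℤ)) = ((2 : ℝ) ^ (k : ℤ) * (2 : ℝ) ^ (k : ℤ))⁻¹ := by
      rw [zpow_neg, ← mul_zpow]; norm_num
    rw [hτ, h4, zpow_add₀ (by norm_num : (2:ℝ) ≠ 0), zpow_neg]
    field_simp
  have hc2 : ∀ k : ℕ, (2 : ℝ) ^ (k : ℤ) * τ (k + 1) = ((2 : ℝ) ^ (m + k))⁻¹ / 4 := by
    intro k
    have : τ (k + 1) = τ k / 4 := by
      rw [hτ, hτ]
      push_cast
      rw [neg_add, zpow_add₀ (by norm_num : (4:ℝ) ≠ 0)]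
      norm_num
      ring
    rw [this, ← hc1 k]; ring
  refine ⟨10, by norm_num, ?_, ?_, ?_, ?_, ?_⟩
  · -- telescoping sum
    intro x
    set g : ℕ → ℝ := fun k =>
      τ k * Set.indicator (Set.Ioo ((2 : ℝ) ^ (m + k)) ((2 : ℝ) ^ (m + k + 1))) 1 x with hg
    have hfg : ∀ k : ℕ, (2 : ℝ) ^ (-(k : ℤ)) * b k x = g k - g (k + 1) := by
      intro k
      rw [hb, hg]
      have : ((m : ℤ) + ((k : ℕ) + 1 : ℕ)) = m + k + 1 := by push_cast; ring
      simp only [this]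
      have h1 : (2 : ℝ) ^ (-(k : ℤ)) * 2 ^ (k : ℤ) = 1 := by
        rw [← zpow_add₀ (by norm_num : (2:ℝ) ≠ 0)]; simp
      have h2' : ((m : ℤ) + (k : ℕ) + 1 + 1) = m + k + 2 := by ring
      rw [← mul_assoc, h1, one_mul, h2']
    rw [tsum_congr hfg]
    obtain ⟨K, hK⟩ : ∃ K : ℕ, x < 2 ^ m * 2 ^ K := by
      obtain ⟨k, hk⟩ := pow_unbounded_of_one_lt (x * 2 ^ (-m)) (by norm_num : (1 : ℝ) < 2)
      refine ⟨k, ?_⟩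
      have h2m : (0 : ℝ) < 2 ^ m := hP m
      have hx : x * 2 ^ (-m) * 2 ^ m < 2 ^ k * 2 ^ m := by nlinarith
      rw [mul_assoc, ← zpow_add₀ (by norm_num : (2:ℝ) ≠ 0), neg_add_cancel, zpow_zero,
        mul_one] at hx
      linarith
    have hKz : ∀ k : ℕ, K ≤ k → g k = 0 := by
      intro k hk
      have hx : x < (2 : ℝ) ^ (m + k) := by
        calc x < 2 ^ m * 2 ^ K := hK
        _ ≤ 2 ^ m * 2 ^ k := by
            have := pow_le_pow_right₀ (by norm_num : (1:ℝ) ≤ 2) hk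
            nlinarith [hP m]
        _ = 2 ^ (m + (k : ℤ)) := by
            rw [zpow_add₀ (by norm_num : (2:ℝ) ≠ 0), zpow_natCast]
      rw [hg]
      simp only [Set.indicator_of_notMem (fun hmem : x ∈ Set.Ioo _ _ =>
        absurd hmem.1 (not_lt.2 hx.le)), mul_zero]
    rw [tsum_eq_sum (s := Finset.range K) (by
      intro k hk
      have hKk : K ≤ k := le_of_not_gt (by simpa using hk)
      rw [hKz k hKk, hKz (k + 1) (hKk.trans (Nat.le_succ k)), sub_zero])]
    rw [Finset.sum_range_sub' g K, hKz K le_rfl, sub_zero, hg]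
    simp only [Nat.cast_zero, add_zero]
    rw [ha, hτ]
    simp
  · -- support
    intro k x hx
    have hA : (2 : ℝ) ^ (m + k) ≤ 2 ^ (m + k + 1) := hmono _ _ (by linarith)
    have hB : (2 : ℝ) ^ (m + k + 1) ≤ 2 ^ (m + k + 2) := hmono _ _ (by linarith)
    rw [hb]
    have h1 : x ∉ Set.Ioo ((2 : ℝ) ^ (m + k)) ((2 : ℝ) ^ (m + k + 1)) := fun hmem =>
      hx ⟨hmem.1, lt_of_lt_of_le hmem.2 hB⟩
    have h2' : x ∉ Set.Ioo ((2 : ℝ) ^ (m + k + 1)) ((2 : ℝ) ^ (m + k + 2)) := fun hmem =>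
      hx ⟨lt_of_le_of_lt hA hmem.1, hmem.2⟩
    rw [Set.indicator_of_notMem h1, Set.indicator_of_notMem h2']
    ring
  · -- mean zero
    intro k
    set A := (2 : ℝ) ^ (m + k) with hA
    set M := (2 : ℝ) ^ (m + k + 1) with hM
    set B := (2 : ℝ) ^ (m + k + 2) with hB
    have hAM : A ≤ M := hmono _ _ (by linarith)
    have hMB : M ≤ B := hmono _ _ (by linarith)
    have hMA : M = 2 * A := by rw [hM, hA, ← hstep]
    have hBM : B = 2 * M := by
      have he : (m + (k:ℤ) + 2) = (m + k + 1) + 1 := by ring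
      rw [hB, hM, he, hstep]
    have hA0 : (0 : ℝ) < A := hP _
    have hsub1 : Set.Ioo A M ⊆ Set.Ioo A B := Set.Ioo_subset_Ioo le_rfl hMB
    have hsub2 : Set.Ioo M B ⊆ Set.Ioo A B := Set.Ioo_subset_Ioo hAM le_rfl
    have hpt : ∀ x : ℝ, b k x * x =
        ((2 : ℝ) ^ (k : ℤ) * τ k) * (Set.Ioo A M).indicator id x -
        ((2 : ℝ) ^ (k : ℤ) * τ (k + 1)) * (Set.Ioo M B).indicator id x := by
      intro x
      rw [hb]
      by_cases h1 : x ∈ Set.Ioo A M <;> by_cases h2' : x ∈ Set.Ioo M B <;>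
        simp [← hA, ← hM, ← hB, h1, h2', Set.indicator_of_mem, Set.indicator_of_notMem] <;> ring
    rw [MeasureTheory.integral_congr_ae (Filter.Eventually.of_forall hpt)]
    rw [integral_sub ((aux_integ_id _ A M).const_mul _) ((aux_integ_id _ M B).const_mul _),
      integral_const_mul, integral_const_mul, aux_ind_int _ _ _ hsub1, aux_ind_int _ _ _ hsub2]
    simp only [id_eq]
    rw [aux_int_id A M hAM, aux_int_id M B hMB, hc1, hc2]
    rw [hMA] at hBM
    rw [hBM, hMA]
    have hAne : A ≠ 0 := ne_of_gt hA0
    field_simp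
    ring
  · -- L² bound
    intro k
    set A := (2 : ℝ) ^ (m + k) with hA
    set M := (2 : ℝ) ^ (m + k + 1) with hM
    set B := (2 : ℝ) ^ (m + k + 2) with hB
    have hAM : A ≤ M := hmono _ _ (by linarith)
    have hMB : M ≤ B := hmono _ _ (by linarith)
    have hMA : M = 2 * A := by rw [hM, hA, ← hstep]
    have hBM : B = 2 * M := by
      have he : (m + (k:ℤ) + 2) = (m + k + 1) + 1 := by ring
      rw [hB, hM, he, hstep]
    have hA0 : (0 : ℝ) < A := hP _
    have hM0 : (0 : ℝ) < M := hP _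
    have hsub1 : Set.Ioo A M ⊆ Set.Ioo A B := Set.Ioo_subset_Ioo le_rfl hMB
    have hsub2 : Set.Ioo M B ⊆ Set.Ioo A B := Set.Ioo_subset_Ioo hAM le_rfl
    have hpt : ∀ x : ℝ, (b k x) ^ 2 / x =
        ((2 : ℝ) ^ (k : ℤ) * τ k) ^ 2 * (Set.Ioo A M).indicator (fun y => 1 / y) x +
        ((2 : ℝ) ^ (k : ℤ) * τ (k + 1)) ^ 2 * (Set.Ioo M B).indicator (fun y => 1 / y) x := by
      intro x
      rw [hb]
      by_cases h1 : x ∈ Set.Ioo A M <;> by_cases h2' : x ∈ Set.Ioo M B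
      · exact absurd h2'.1 (not_lt.2 h1.2.le)
      · simp [← hA, ← hM, ← hB, h1, h2', Set.indicator_of_mem, Set.indicator_of_notMem]; ring
      · simp [← hA, ← hM, ← hB, h1, h2', Set.indicator_of_mem, Set.indicator_of_notMem]; ring
      · simp [← hA, ← hM, ← hB, h1, h2', Set.indicator_of_mem, Set.indicator_of_notMem]
    rw [MeasureTheory.integral_congr_ae (Filter.Eventually.of_forall hpt)]
    rw [integral_add ((aux_integ_inv _ A M hA0 hAM).const_mul _)
        ((aux_integ_inv _ M B hM0 hMB).const_mul _),
      integral_const_mul, integral_const_mul, aux_ind_int _ _ _ hsub1, aux_ind_int _ _ _ hsub2,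
      aux_int_inv A M hA0 hAM, aux_int_inv M B hM0 hMB, aux_int_id A B (hAM.trans hMB),
      hc1, hc2]
    have hlog1 : Real.log (M / A) = Real.log 2 := by rw [hMA]; field_simp
    have hlog2 : Real.log (B / M) = Real.log 2 := by rw [hBM]; field_simp
    rw [hlog1, hlog2]
    have hlog : Real.log 2 ≤ 1 := by
      have := Real.log_le_sub_one_of_pos (by norm_num : (0:ℝ) < 2)
      linarith
    have hlogpos : 0 < Real.log 2 := Real.log_pos (by norm_num)
    rw [hMA] at hBM
    rw [hBM]
    have hinv : ((2 * (2 * A)) ^ 2 - A ^ 2) / 2 = 15 / 2 * A ^ 2 := by ring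
    rw [hinv]
    have hAne : A ≠ 0 := ne_of_gt hA0
    have h1 : (10 : ℝ) ^ 2 * (15 / 2 * A ^ 2)⁻¹ = 40 / 3 * (A⁻¹) ^ 2 := by
      field_simp; ring
    rw [h1]
    nlinarith [sq_nonneg A⁻¹, hlog, hlogpos]
  · -- sum bound
    have heq : ∀ k : ℕ, (2 : ℝ) ^ (-(k : ℤ)) = (1 / 2 : ℝ) ^ k := by
      intro k; rw [zpow_neg, zpow_natCast, one_div, inv_pow]
    rw [tsum_congr heq, tsum_geometric_of_lt_one (by norm_num) (by norm_num)]
    norm_num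
end
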